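/- arXiv:1901.04223 — 8 statements merged into one kernel-verified Lean document; each statement's English description precedes it below -/
import Mathlib

section
/- For any natural numbers r and C there exists a natural number C' with the following property. Let G be a finite group and let A ≤ G be an abelian subgroup such that A can be generated by r elements and [G:A] ≤ C. Let Aut_A(G) ≤ Aut(G) be the subgroup of automorphisms φ : G → G satisfying φ(A) = A. Then [Aut(G) : Aut_A(G)] ≤ C'. -/
open Pointwise

lemma key_count {G : Type} [Group G] [Finite G] (S : Finset G)
    (hS : Subgroup.closure (S : Set G) = ⊤) (n : ℕ) :
    Nat.card {H : Subgroup G // H.index = n} ≤ n.factorial ^ S.card := by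
  classical
  rcases eq_or_ne n 0 with rfl | hn
  · have : IsEmpty {H : Subgroup G // H.index = 0} :=
      ⟨fun H => Subgroup.index_ne_zero_of_finite H.2⟩
    simp [Nat.card_of_isEmpty]
  haveI : NeZero n := ⟨hn⟩
  have hcard : ∀ H : {H : Subgroup G // H.index = n},
      Nat.card (G ⧸ (H : Subgroup G)) = n := fun H => by
    rw [← Subgroup.index_eq_card]; exact H.2
  let f : ∀ H : {H : Subgroup G // H.index = n}, (G ⧸ (H : Subgroup G)) ≃ Fin n :=
    fun H => Finite.equivFinOfCardEq (hcard H)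
  let e : ∀ H : {H : Subgroup G // H.index = n}, (G ⧸ (H : Subgroup G)) ≃ Fin n :=
    fun H => (f H).trans (Equiv.swap (f H ((1 : G) : G ⧸ (H : Subgroup G))) 0)
  have he1 : ∀ H, e H ((1 : G) : G ⧸ (H : Subgroup G)) = 0 := fun H => by
    simp [e, Equiv.swap_apply_left]
  let ρ : {H : Subgroup G // H.index = n} → (G →* Equiv.Perm (Fin n)) := fun H =>
    { toFun := fun g => (e H).permCongr (MulAction.toPerm g)
      map_one' := by
        ext x
        simp [Equiv.permCongr_apply]
      map_mul' := by
        intro a b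
        ext x
        simp [Equiv.permCongr_apply, mul_smul] }
  have hmem : ∀ H : {H : Subgroup G // H.index = n}, ∀ g : G,
      g ∈ (H : Subgroup G) ↔ ρ H g 0 = 0 := by
    intro H g
    have h0 : (e H).symm 0 = ((1 : G) : G ⧸ (H : Subgroup G)) := by
      rw [← he1 H, Equiv.symm_apply_apply]
    have : ρ H g 0 = e H ((g : G) : G ⧸ (H : Subgroup G)) := by
      simp only [ρ, MonoidHom.coe_mk, OneHom.coe_mk, Equiv.permCongr_apply,
        MulAction.toPerm_apply, h0]
      rw [MulAction.Quotient.smul_mk]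
      simp
    rw [this, ← he1 H, (e H).apply_eq_iff_eq, QuotientGroup.eq]
    simp
  have hinj : Function.Injective
      (fun H : {H : Subgroup G // H.index = n} => fun s : {x // x ∈ S} => ρ H s) := by
    intro H H' hHH'
    have : ρ H = ρ H' := by
      refine MonoidHom.eq_of_eqOn_dense hS ?_
      intro x hx
      exact congrFun hHH' ⟨x, hx⟩
    ext g
    rw [hmem H g, hmem H' g, this]
  calc Nat.card {H : Subgroup G // H.index = n}
      ≤ Nat.card ({x // x ∈ S} → Equiv.Perm (Fin n)) :=
        Nat.card_le_card_of_injective _ hinj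
    _ = n.factorial ^ S.card := by
        rw [Nat.card_fun]
        simp [Nat.card_eq_fintype_card, Fintype.card_perm]

/-- **Lemma (Aut_A(G) has bounded index in Aut(G)).**
For any natural numbers `r, C` there exists `C'` such that: for every finite group `G`
and every abelian subgroup `A ≤ G` that can be generated by `r` elements and satisfies
`[G:A] ≤ C`, the subgroup `Aut_A(G) = {φ ∈ Aut(G) | φ(A) = A}` (which is exactly the
stabilizer of `A` under the natural action of `MulAut G` on subgroups of `G`) satisfies
`[Aut(G) : Aut_A(G)] ≤ C'`. -/
theorem stmt_4 (r C : ℕ) :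
    ∃ C' : ℕ, ∀ (G : Type) [Group G] [Finite G] (A : Subgroup G),
      IsMulCommutative A →
      (∃ s : Finset G, s.card ≤ r ∧ Subgroup.closure (s : Set G) = A) →
      A.index ≤ C →
      (MulAction.stabilizer (MulAut G) A).index ≤ C' := by
  classical
  refine ⟨C.factorial ^ (r + C), ?_⟩
  intro G _ _ A _ ⟨s, hs_card, hs_cl⟩ hindex
  haveI : Fintype G := Fintype.ofFinite G
  haveI : Finite (Subgroup G) :=
    Finite.of_injective (fun H : Subgroup G => (H : Set G)) SetLike.coe_injective
  haveI : Fintype (G ⧸ A) := Fintype.ofFinite _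
  -- a transversal
  let T : Finset G := Finset.image (fun q : G ⧸ A => q.out) Finset.univ
  have hT_card : T.card ≤ C := by
    calc T.card ≤ Finset.univ.card := Finset.card_image_le
      _ = Fintype.card (G ⧸ A) := Finset.card_univ
      _ = A.index := by rw [← Nat.card_eq_fintype_card, ← Subgroup.index_eq_card]
      _ ≤ C := hindex
  let S : Finset G := s ∪ T
  have hS_card : S.card ≤ r + C :=
    le_trans (Finset.card_union_le s T) (Nat.add_le_add hs_card hT_card)
  have hS_top : Subgroup.closure (S : Set G) = ⊤ := by
    rw [eq_top_iff]
    intro g _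
    have hA : A ≤ Subgroup.closure (S : Set G) := by
      rw [← hs_cl]
      exact Subgroup.closure_mono (by simp [S])
    have ht : (((g : G ⧸ A).out : G)) ∈ Subgroup.closure (S : Set G) := by
      apply Subgroup.subset_closure
      simp only [S, Finset.coe_union, Set.mem_union]
      right
      simp [T]
    have hmem : ((g : G ⧸ A).out)⁻¹ * g ∈ A := by
      rw [← QuotientGroup.eq, QuotientGroup.out_eq']
    have := mul_mem ht (hA hmem)
    simpa using this
  -- orbit elements have the same index
  have horb : ∀ B ∈ MulAction.orbit (MulAut G) A, Subgroup.index B = A.index := by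
    rintro B ⟨φ, rfl⟩
    show (φ • A).index = A.index
    rw [Subgroup.pointwise_smul_def]
    show (A.map φ.toMonoidHom).index = A.index
    rw [Subgroup.index_map_eq]
    · exact fun g => ⟨φ.symm g, φ.apply_symm_apply g⟩
    · intro g hg
      have : φ g = 1 := hg
      have : g = 1 := by
        have := congrArg φ.symm this
        simpa using this
      rw [this]
      exact one_mem A
  rw [MulAction.index_stabilizer, ← Nat.card_coe_set_eq]
  have hle : Nat.card (MulAction.orbit (MulAut G) A) ≤
      Nat.card {H : Subgroup G // H.index = A.index} := by
    apply Nat.card_le_card_of_injective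
      (fun B : MulAction.orbit (MulAut G) A => ⟨B.1, horb B.1 B.2⟩)
    intro B B' h
    simp only [Subtype.mk.injEq] at h
    exact Subtype.ext h
  refine le_trans hle (le_trans (key_count S hS_top A.index) ?_)
  calc (A.index).factorial ^ S.card ≤ C.factorial ^ S.card :=
        Nat.pow_le_pow_left (Nat.factorial_le hindex) _
    _ ≤ C.factorial ^ (r + C) :=
        Nat.pow_le_pow_right (Nat.factorial_pos C) hS_card
end

section
/- For any natural numbers r and C there exists a natural number C' with the following property. Let G be a finite group, let G0 ⊴ G be a normal subgroup, and let A ≤ G0 be an abelian subgroup such that [G0:A] ≤ C and A can be generated by r elements. Then the normalizer N_G(A) of A in G satisfies [G : N_G(A)] ≤ C'. -/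
open Subgroup

private lemma aux_inj_le {G : Type} [Group G] (G0 T : Subgroup G)
    {B₁ B₂ : Subgroup G} (h2 : T ≤ B₂) (hB1 : B₁ ≤ G0)
    (h : (QuotientGroup.mk '' ((B₁.subgroupOf G0 : Subgroup G0) : Set G0) :
        Set (G0 ⧸ T.subgroupOf G0)) ⊆
        QuotientGroup.mk '' ((B₂.subgroupOf G0 : Subgroup G0) : Set G0)) : B₁ ≤ B₂ := by
  intro x hx
  have hx0 : x ∈ G0 := hB1 hx
  obtain ⟨y, hy, hyx⟩ := h ⟨⟨x, hx0⟩, hx, rfl⟩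
  have h3 : (y : G0)⁻¹ * ⟨x, hx0⟩ ∈ T.subgroupOf G0 := (QuotientGroup.eq).mp hyx
  have h4 : ((y : G0) : G)⁻¹ * x ∈ T := h3
  have h6 : ((y : G0) : G) ∈ B₂ := hy
  simpa using B₂.mul_mem h6 (h2 h4)

/-- **Lemma (normalizer of a bounded-index abelian subgroup of a normal subgroup).**
For any natural numbers `r, C` there exists `C'` such that: for every finite group `G`,
every normal subgroup `G0 ⊴ G` and every abelian subgroup `A ≤ G0` satisfying
`[G0 : A] ≤ C` and generated by `r` elements, the normalizer `N_G(A)` satisfies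
`[G : N_G(A)] ≤ C'`. -/
theorem stmt_5 (r C : ℕ) :
    ∃ C' : ℕ, ∀ (G : Type) [Group G] [Finite G] (G0 A : Subgroup G),
      G0.Normal → A ≤ G0 → IsMulCommutative A →
      A.relIndex G0 ≤ C →
      (∃ s : Finset G, s.card ≤ r ∧ Subgroup.closure (s : Set G) = A) →
      (Subgroup.normalizer (A : Set G)).index ≤ C' := by
  classical
  refine ⟨2 ^ (Nat.factorial C ^ r * C), ?_⟩
  intro G _ _ G0 A hN hAG0 hcomm hC hgen
  obtain ⟨s, hs_card, hs_clo⟩ := hgen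
  set n := Nat.factorial C with hn
  -- the conjugates `B g = g⁻¹ A g`
  set B : G → Subgroup G := fun g => A.comap (MulAut.conj g).toMonoidHom with hB
  have hmemB : ∀ g x, x ∈ B g ↔ g * x * g⁻¹ ∈ A := by
    intro g x
    simp [hB, Subgroup.mem_comap, MulAut.conj_apply]
  have hBle : ∀ g, B g ≤ G0 := by
    intro g x hx
    rw [hmemB] at hx
    have h1 : g * x * g⁻¹ ∈ G0 := hAG0 hx
    have h2 := hN.conj_mem _ h1 g⁻¹
    simpa [mul_assoc] using h2
  have hrelne : ∀ (H K : Subgroup G), H.relIndex K ≠ 0 := by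
    intro H K
    exact Subgroup.index_ne_zero_of_finite
  have hBrel : ∀ g, (B g).relIndex G0 ≤ C := by
    intro g
    have hmap : G0.map (MulAut.conj g).toMonoidHom = G0 := by
      ext x
      constructor
      · rintro ⟨y, hy, rfl⟩
        simpa [MulAut.conj_apply] using hN.conj_mem y hy g
      · intro hx
        refine ⟨g⁻¹ * x * g, by simpa [mul_assoc] using hN.conj_mem x hx g⁻¹, ?_⟩
        simp [MulAut.conj_apply]
        group
    have h1 := Subgroup.relIndex_comap ((MulAut.conj g).toMonoidHom) G0 (H := A)
    rw [hmap] at h1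
    calc (B g).relIndex G0 = A.relIndex G0 := h1
      _ ≤ C := hC
  -- `T`, the subgroup generated by `n`-th powers of elements of `A`
  set T : Subgroup G := Subgroup.closure ((fun a => a ^ n) '' (A : Set G)) with hT
  have hTA : T ≤ A := by
    rw [hT, Subgroup.closure_le]
    rintro x ⟨a, ha, rfl⟩
    exact A.pow_mem ha n
  have hTB : ∀ g, T ≤ B g := by
    intro g
    rw [hT, Subgroup.closure_le]
    rintro x ⟨a, ha, rfl⟩
    have hK : ((B g) ⊓ A).relIndex A ≤ C := by
      rw [Subgroup.inf_relIndex_right]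
      calc (B g).relIndex A ≤ (B g).relIndex G0 :=
          Subgroup.relIndex_le_of_le_right hAG0 (hrelne _ _)
        _ ≤ C := hBrel g
    set K' : Subgroup A := ((B g) ⊓ A).subgroupOf A with hK'
    have hKix : K'.index ≠ 0 := Subgroup.index_ne_zero_of_finite
    have hKle : K'.index ≤ C := hK
    have hdvd : K'.index ∣ n := Nat.dvd_factorial (Nat.pos_of_ne_zero hKix) hKle
    obtain ⟨m, hm⟩ := hdvd
    have h1 : (⟨a, ha⟩ : A) ^ K'.index ∈ K' := K'.pow_index_mem _
    have h2 : (⟨a, ha⟩ : A) ^ n ∈ K' := by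
      rw [hm, pow_mul]
      exact K'.pow_mem h1 m
    have h3 : a ^ n ∈ (B g) ⊓ A := by
      rw [hK', Subgroup.mem_subgroupOf] at h2
      simpa using h2
    exact h3.1
  -- bound on the index of `T` in `A`
  have hnpos : 0 < n := Nat.factorial_pos C
  have hpow : ∀ a : A, (a : G) ^ n ∈ T := fun a => Subgroup.subset_closure ⟨a, a.2, rfl⟩
  have hTArel : T.relIndex A ≤ n ^ r := by
    set T' : Subgroup A := T.subgroupOf A with hT'
    have hexp : ∀ x : A ⧸ T', x ^ n = 1 := by
      intro x
      induction x using QuotientGroup.induction_on with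
      | H a =>
        rw [← QuotientGroup.mk_pow, QuotientGroup.eq_one_iff]
        exact hpow a
    have hcard1 : Nat.card (A ⧸ T') ∣ n ^ Group.rank (A ⧸ T') :=
      by
        letI : CommGroup (A ⧸ T') := { (inferInstance : Group (A ⧸ T')) with
          mul_comm := fun x y => by
            induction x using QuotientGroup.induction_on with
            | H a =>
              induction y using QuotientGroup.induction_on with
              | H b =>
                rw [← QuotientGroup.mk_mul, ← QuotientGroup.mk_mul, hcomm.is_comm.comm] }
        exact card_dvd_exponent_pow_rank' _ hexp
    have hrankA : Group.rank A ≤ r := by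
      have h1 := Subgroup.rank_closure_finset_le_card s
      rw [Subgroup.rank_congr hs_clo] at h1
      exact h1.trans hs_card
    have hrankQ : Group.rank (A ⧸ T') ≤ r :=
      le_trans (Group.rank_le_of_surjective (QuotientGroup.mk' T')
        (QuotientGroup.mk'_surjective T')) hrankA
    calc Nat.card (A ⧸ T') ≤ n ^ Group.rank (A ⧸ T') :=
        Nat.le_of_dvd (Nat.pow_pos hnpos) hcard1
      _ ≤ n ^ r := Nat.pow_le_pow_right hnpos hrankQ
  have hrelT : T.relIndex G0 ≤ n ^ r * C := by
    rw [← Subgroup.relIndex_mul_relIndex T A G0 hTA hAG0]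
    exact Nat.mul_le_mul hTArel hC
  -- conjugation and the normalizer
  have hiff : ∀ g1 g2 : G, B g1⁻¹ = B g2⁻¹ ↔ g1⁻¹ * g2 ∈ (Subgroup.normalizer (A : Set G)) := by
    intro g1 g2
    rw [Subgroup.mem_normalizer_iff]
    constructor
    · intro h x
      have h1 := SetLike.ext_iff.mp h (g2 * x * g2⁻¹)
      rw [hmemB, hmemB] at h1
      constructor
      · intro hx
        have h2 : g2⁻¹ * (g2 * x * g2⁻¹) * g2⁻¹⁻¹ ∈ A := by simpa [mul_assoc] using hx
        have h3 := h1.mpr h2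
        simpa [mul_assoc, mul_inv_rev] using h3
      · intro hx
        have h2 : g1⁻¹ * (g2 * x * g2⁻¹) * g1⁻¹⁻¹ ∈ A := by
          simpa [mul_assoc, mul_inv_rev] using hx
        have h3 := h1.mp h2
        simpa [mul_assoc] using h3
    · intro h
      ext x
      rw [hmemB, hmemB]
      have h1 := h (g2⁻¹ * x * g2)
      constructor
      · intro hx
        have h2 : (g1⁻¹ * g2) * (g2⁻¹ * x * g2) * (g1⁻¹ * g2)⁻¹ ∈ A := by
          simpa [mul_assoc, mul_inv_rev] using hx
        have h3 := h1.mpr h2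
        simpa [mul_assoc] using h3
      · intro hx
        have h2 : g2⁻¹ * x * g2 ∈ A := by simpa [mul_assoc] using hx
        have h3 := h1.mp h2
        simpa [mul_assoc, mul_inv_rev] using h3
  -- final counting
  set T'' : Subgroup G0 := T.subgroupOf G0 with hT''
  let f : G → Set (G0 ⧸ T'') := fun g =>
    QuotientGroup.mk '' (((B g⁻¹).subgroupOf G0 : Subgroup G0) : Set G0)
  let F : G ⧸ (Subgroup.normalizer (A : Set G)) → Set (G0 ⧸ T'') := fun q =>
    Quotient.liftOn' q f (by
      intro a b hab
      have h1 : a⁻¹ * b ∈ (Subgroup.normalizer (A : Set G)) := QuotientGroup.leftRel_apply.mp hab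
      have h2 : B a⁻¹ = B b⁻¹ := (hiff a b).mpr h1
      simp only [f, h2])
  have hFinj : Function.Injective F := by
    intro q1 q2
    refine Quotient.inductionOn₂' q1 q2 ?_
    intro g1 g2 h
    have h' : f g1 = f g2 := h
    have hBB : B g1⁻¹ = B g2⁻¹ :=
      le_antisymm (aux_inj_le G0 T (hTB _) (hBle _) h'.le)
        (aux_inj_le G0 T (hTB _) (hBle _) h'.ge)
    exact Quotient.sound' (QuotientGroup.leftRel_apply.mpr ((hiff g1 g2).mp hBB))
  have e : Set (G0 ⧸ T'') ≃ ((G0 ⧸ T'') → Bool) :=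
    (Equiv.refl (G0 ⧸ T'')).arrowCongr Equiv.propEquivBool
  haveI : Finite (Set (G0 ⧸ T'')) := Finite.of_equiv _ e.symm
  have hcard : Nat.card (Set (G0 ⧸ T'')) = 2 ^ Nat.card (G0 ⧸ T'') := by
    rw [Nat.card_congr e, Nat.card_fun]
    norm_num
  calc (Subgroup.normalizer (A : Set G)).index = Nat.card (G ⧸ (Subgroup.normalizer (A : Set G))) := rfl
    _ ≤ Nat.card (Set (G0 ⧸ T'')) := Nat.card_le_card_of_injective F hFinj
    _ = 2 ^ Nat.card (G0 ⧸ T'') := hcard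
    _ ≤ 2 ^ (n ^ r * C) := Nat.pow_le_pow_right (by norm_num) hrelT
end

section
/- Let 1 → Z → G → A → 1 be an exact sequence of finite groups, where Z is contained in the center of G and A is abelian. Let r be a positive integer such that every abelian subgroup of G can be generated by r elements. Then A can be generated by ⌊r(log₂(#Z) + 1)⌋ elements. -/
open scoped commutatorElement


lemma myClosure_isCommutative {G : Type} [Group G] (S : Set G)
    (h : ∀ a ∈ S, ∀ b ∈ S, a * b = b * a) : IsMulCommutative (Subgroup.closure S) := by
  rw [← Subgroup.le_centralizer_iff_isMulCommutative]
  refine (Subgroup.closure_le _).2 fun a ha => ?_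
  refine Subgroup.mem_centralizer_iff.mpr fun g hg => ?_
  have hle : Subgroup.closure S ≤ Subgroup.centralizer {a} := by
    refine (Subgroup.closure_le _).2 fun b hb => ?_
    refine Subgroup.mem_centralizer_iff.mpr fun y hy => ?_
    rcases hy with rfl
    exact h _ ha _ hb
  exact (Subgroup.mem_centralizer_iff.mp (hle hg) a rfl).symm

lemma myCentralizer_set_le {G : Type} [Group G] (S : Set G) {g : G}
    (hg : ∀ b ∈ S, g * b = b * g) {x : G} (hx : x ∈ Subgroup.closure S) :
    g * x = x * g := by
  have hle : Subgroup.closure S ≤ Subgroup.centralizer {g} := by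
    refine (Subgroup.closure_le _).2 fun b hb => ?_
    refine Subgroup.mem_centralizer_iff.mpr fun y hy => ?_
    rcases hy with rfl
    exact hg b hb
  exact Subgroup.mem_centralizer_iff.mp (hle hx) g rfl

lemma gen_of_index {A : Type} [Group A] [Finite A] :
    ∀ n (B : Subgroup A) (s : Finset A), Subgroup.closure (s : Set A) = B → B.index ≤ n →
    ∃ t : Finset A, t.card ≤ s.card + Nat.log 2 n ∧ Subgroup.closure (t : Set A) = ⊤ := by
  intro n
  induction n using Nat.strong_induction_on with
  | _ n ih =>
    intro B s hs hB
    haveI := Classical.decEq A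
    by_cases htop : B = ⊤
    · exact ⟨s, by omega, htop ▸ hs⟩
    · have hne : B.index ≠ 0 := Subgroup.index_ne_zero_of_finite
      have hge2 : 2 ≤ B.index := by
        have h1 : B.index ≠ 1 := fun h => htop (Subgroup.index_eq_one.mp h)
        omega
      obtain ⟨a, -, haB⟩ := SetLike.exists_of_lt (lt_top_iff_ne_top.mpr htop : B < ⊤)
      set B' := Subgroup.closure (insert a (s : Set A)) with hB'
      have hBB' : B ≤ B' := by
        rw [← hs]; exact Subgroup.closure_mono (Set.subset_insert a s)
      have haB' : a ∈ B' := Subgroup.subset_closure (Set.mem_insert a _)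
      have hlt : B < B' := lt_of_le_of_ne hBB' (fun h => haB (h ▸ haB'))
      have hmul := Subgroup.relIndex_mul_index hBB'
      have hrel : 2 ≤ B.relIndex B' := by
        have h1 : B.relIndex B' ≠ 1 := fun h => absurd (Subgroup.relIndex_eq_one.mp h) (not_le_of_gt hlt)
        have h0 : B.relIndex B' ≠ 0 := by intro h; rw [h] at hmul; simp at hmul; omega
        omega
      have hB'le : B'.index ≤ n / 2 := by
        have : 2 * B'.index ≤ B.index :=
          calc 2 * B'.index ≤ B.relIndex B' * B'.index := Nat.mul_le_mul_right _ hrel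
            _ = B.index := hmul
        omega
      have hn2 : 2 ≤ n := le_trans hge2 hB
      have hlog : 1 ≤ Nat.log 2 n := Nat.log_pos one_lt_two hn2
      have hcl : Subgroup.closure ((insert a s : Finset A) : Set A) = B' := by
        rw [Finset.coe_insert]
      obtain ⟨t, htc, htt⟩ := ih (n / 2) (by omega) B' (insert a s) hcl hB'le
      refine ⟨t, ?_, htt⟩
      have hcard : (insert a s).card ≤ s.card + 1 := Finset.card_insert_le a s
      have hld : Nat.log 2 (n / 2) = Nat.log 2 n - 1 := Nat.log_div_base 2 n
      omega

/-- **Lemma (rank of an abelian quotient by a central subgroup).**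
Let `1 → Z → G → A → 1` be an exact sequence of finite groups (encoded by a surjective
homomorphism `π : G →* A` with central kernel `Z = ker π`), with `A` abelian.
If `r ≥ 1` is such that every abelian subgroup of `G` can be generated by `r` elements,
then `A` can be generated by `⌊r (log₂ #Z + 1)⌋` elements. -/
theorem stmt_6 (G A : Type) [Group G] [Finite G] [CommGroup A] [Finite A]
    (π : G →* A) (hsurj : Function.Surjective π)
    (hcentral : π.ker ≤ Subgroup.center G)
    (r : ℕ) (hr : 0 < r)
    (hgen : ∀ B : Subgroup G, IsMulCommutative B →
      ∃ s : Finset G, s.card ≤ r ∧ Subgroup.closure (s : Set G) = B) :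
    ∃ t : Finset A,
      (t.card : ℤ) ≤ ⌊(r : ℝ) * (Real.logb 2 (Nat.card π.ker) + 1)⌋ ∧
      Subgroup.closure (t : Set A) = ⊤ := by
  classical
  set m := Nat.card π.ker with hm
  have hm1 : 1 ≤ m := Nat.card_pos
  -- maximal abelian subgroup H containing ker π
  have hkerc : IsMulCommutative (π.ker : Subgroup G) := by
    rw [← Subgroup.le_centralizer_iff_isMulCommutative]
    exact le_trans hcentral (Subgroup.center_le_centralizer _)
  obtain ⟨H, ⟨hHc, hHker⟩, hmax⟩ :=
    Set.Finite.exists_maximalFor id {K : Subgroup G | IsMulCommutative K ∧ π.ker ≤ K}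
      (Set.toFinite _) ⟨π.ker, hkerc, le_rfl⟩
  haveI := hHc
  -- centralizer of H is H
  have hcent : ∀ g : G, (∀ h ∈ H, g * h = h * g) → g ∈ H := by
    intro g hg
    set K := Subgroup.closure (insert g (H : Set G)) with hKdef
    have hKc : IsMulCommutative K := by
      apply myClosure_isCommutative
      rintro a (rfl | ha) b (rfl | hb)
      · rfl
      · exact hg b hb
      · exact (hg a ha).symm
      · exact Subgroup.mul_comm_of_mem_isMulCommutative H ha hb
    have hHK : H ≤ K := fun x hx => Subgroup.subset_closure (Set.mem_insert_of_mem g hx)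
    have hKS : K ∈ {K : Subgroup G | IsMulCommutative K ∧ π.ker ≤ K} := ⟨hKc, le_trans hHker hHK⟩
    have : H = K := le_antisymm hHK (hmax hKS hHK)
    rw [this]
    exact Subgroup.subset_closure (Set.mem_insert g _)
  -- generators of H
  obtain ⟨s, hscard, hscl⟩ := hgen H hHc
  set B := H.map π with hBdef
  have hBcl : Subgroup.closure ((s.image π : Finset A) : Set A) = B := by
    rw [Finset.coe_image, ← MonoidHom.map_closure, hscl]
  -- index bound: injection A ⧸ B → (s → ker π)
  have hindex : B.index ≤ m ^ r := by
    set lift : A → G := Function.surjInv hsurj with hlift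
    have hliftspec : ∀ a : A, π (lift a) = a := fun a => Function.surjInv_eq hsurj a
    have hker : ∀ (g : G) (x : G), ⁅g, x⁆ ∈ π.ker := by
      intro g x
      rw [MonoidHom.mem_ker, map_commutatorElement]
      exact commutatorElement_eq_one_iff_commute.mpr (mul_comm _ _)
    set F : A ⧸ B → (↥s → ↥π.ker) :=
      fun c => fun x => ⟨⁅lift (Quotient.out c), (x : G)⁆, hker _ _⟩ with hF
    have hFinj : Function.Injective F := by
      intro c₁ c₂ hF12
      set g₁ := lift (Quotient.out c₁) with hg₁
      set g₂ := lift (Quotient.out c₂) with hg₂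
      have hcomm : ∀ x ∈ (s : Set G), (g₂⁻¹ * g₁) * x = x * (g₂⁻¹ * g₁) := by
        intro x hx
        have h1 : ⁅g₁, x⁆ = ⁅g₂, x⁆ := congrArg Subtype.val (congrFun hF12 ⟨x, hx⟩)
        rw [commutatorElement_def, commutatorElement_def] at h1
        have h2 : g₁ * x * g₁⁻¹ = g₂ * x * g₂⁻¹ := by
          have := congrArg (· * x) h1
          simpa [mul_assoc] using this
        calc g₂⁻¹ * g₁ * x = g₂⁻¹ * (g₁ * x * g₁⁻¹) * g₁ := by group
          _ = g₂⁻¹ * (g₂ * x * g₂⁻¹) * g₁ := by rw [h2]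
          _ = x * (g₂⁻¹ * g₁) := by group
      have hmemH : g₂⁻¹ * g₁ ∈ H := by
        apply hcent
        intro h hh
        exact myCentralizer_set_le (s : Set G) hcomm (by rw [hscl]; exact hh)
      have hmemB : (Quotient.out c₂)⁻¹ * (Quotient.out c₁) ∈ B := by
        have : π (g₂⁻¹ * g₁) ∈ B := Subgroup.mem_map_of_mem π hmemH
        simpa [map_mul, map_inv, hliftspec, hg₁, hg₂] using this
      have h5 := (QuotientGroup.eq (s := B)).mpr hmemB
      rw [QuotientGroup.out_eq', QuotientGroup.out_eq'] at h5
      exact h5.symm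
    calc B.index = Nat.card (A ⧸ B) := rfl
      _ ≤ Nat.card (↥s → ↥π.ker) := Nat.card_le_card_of_injective F hFinj
      _ = m ^ s.card := by rw [Nat.card_fun, Nat.card_eq_finsetCard]
      _ ≤ m ^ r := Nat.pow_le_pow_right hm1 hscard
  -- generate A
  obtain ⟨t, htcard, htcl⟩ := gen_of_index (m ^ r) B (s.image π) hBcl hindex
  refine ⟨t, ?_, htcl⟩
  have htc2 : t.card ≤ r + Nat.log 2 (m ^ r) := by
    have := Finset.card_image_le (f := π) (s := s)
    omega
  rw [Int.le_floor]
  have hlogle : (Nat.log 2 (m ^ r) : ℝ) ≤ (r : ℝ) * Real.logb 2 (m : ℝ) := by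
    have hmr1 : 1 ≤ m ^ r := Nat.one_le_pow r m hm1
    have h2 : ((2 : ℕ) : ℝ) ^ (Nat.log 2 (m ^ r)) ≤ ((m ^ r : ℕ) : ℝ) := by
      exact_mod_cast Nat.pow_log_le_self 2 (by omega)
    have h3 : Real.logb 2 ((2 : ℝ) ^ (Nat.log 2 (m ^ r))) ≤ Real.logb 2 ((m ^ r : ℕ) : ℝ) := by
      exact (Real.logb_le_logb one_lt_two (by positivity) (by exact_mod_cast hmr1 : (0:ℝ) < ((m^r:ℕ):ℝ))).mpr h2
    rw [Real.logb_pow] at h3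
    simp [Real.logb_self_eq_one] at h3
    calc (Nat.log 2 (m ^ r) : ℝ) ≤ Real.logb 2 ((m ^ r : ℕ) : ℝ) := by simpa using h3
      _ = (r : ℝ) * Real.logb 2 (m : ℝ) := by push_cast; rw [Real.logb_pow]
  have : (t.card : ℝ) ≤ (r : ℝ) + (r : ℝ) * Real.logb 2 (m : ℝ) := by
    calc (t.card : ℝ) ≤ (r : ℝ) + (Nat.log 2 (m ^ r) : ℝ) := by exact_mod_cast htc2
      _ ≤ (r : ℝ) + (r : ℝ) * Real.logb 2 (m : ℝ) := by linarith
  calc (t.card : ℝ) ≤ (r : ℝ) + (r : ℝ) * Real.logb 2 (m : ℝ) := this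
    _ = (r : ℝ) * (Real.logb 2 (m : ℝ) + 1) := by ring
end

section
/- Let p be a prime and let B ≤ A be finite abelian p-groups, where A can be generated by r elements. Let Aut_B⁰(A) ≤ Aut(A) denote the group of automorphisms of A whose restriction to B is the identity. Then #Aut_B⁰(A) ≤ [A:B]^{r²}. -/
/-- An abelian group generated by `r` elements each of order dividing `n` has at most
`n ^ r` elements. -/
theorem aux_card_le {G : Type*} [CommGroup G] (n r : ℕ) [NeZero n] (g : Fin r → G)
    (hg : Subgroup.closure (Set.range g) = ⊤) (ho : ∀ i, g i ^ n = 1) :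
    Nat.card G ≤ n ^ r := by
  -- per-component homs
  have hcond : ∀ i : Fin r, (zmultiplesHom (Additive G) (Additive.ofMul (g i))) (n : ℤ) = 0 := by
    intro i
    simp only [zmultiplesHom_apply]
    have : ((n:ℤ) • Additive.ofMul (g i)) = Additive.ofMul (g i ^ (n:ℤ)) := rfl
    rw [this, zpow_natCast, ho i]
    rfl
  let h : Fin r → (ZMod n →+ Additive G) := fun i =>
    ZMod.lift n ⟨zmultiplesHom (Additive G) (Additive.ofMul (g i)), hcond i⟩
  let Ψ : (Fin r → ZMod n) →+ Additive G :=
    ∑ i : Fin r, (h i).comp (Pi.evalAddMonoidHom (fun _ => ZMod n) i)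
  let Φ : Multiplicative (Fin r → ZMod n) →* G := AddMonoidHom.toMultiplicativeLeft Ψ
  have hsurj : Function.Surjective Φ := by
    rw [← MonoidHom.range_eq_top]
    rw [eq_top_iff, ← hg, Subgroup.closure_le]
    rintro x ⟨i, rfl⟩
    refine ⟨Multiplicative.ofAdd (Pi.single i (1 : ZMod n)), ?_⟩
    show Additive.toMul (Ψ (Pi.single i 1)) = g i
    have : Ψ (Pi.single i 1) = ∑ j : Fin r, h j ((Pi.single i (1 : ZMod n) : Fin r → ZMod n) j) := by
      simp [Ψ, AddMonoidHom.finset_sum_apply]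
    rw [this, Finset.sum_eq_single i]
    · simp only [Pi.single_eq_same]
      show Additive.toMul (h i (1 : ZMod n)) = g i
      have h1 : ((1 : ℤ) : ZMod n) = (1 : ZMod n) := by push_cast; ring
      rw [← h1]
      show Additive.toMul (ZMod.lift n ⟨zmultiplesHom (Additive G) (Additive.ofMul (g i)), hcond i⟩ (((1:ℤ) : ZMod n))) = g i
      rw [ZMod.lift_coe]
      simp
    · intro j _ hj
      simp [Pi.single_eq_of_ne hj]
    · intro hi; exact absurd (Finset.mem_univ i) hi
  calc Nat.card G ≤ Nat.card (Multiplicative (Fin r → ZMod n)) :=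
        Nat.card_le_card_of_surjective Φ hsurj
    _ = n ^ r := by simp [Nat.card_pi, Nat.card_zmod]


/-- **Lemma (count of automorphisms restricting to the identity on a subgroup).**
Let `p` be a prime and let `B ≤ A` be finite abelian `p`-groups, where `A` can be
generated by `r` elements. Then the group `Aut_B⁰(A)` of automorphisms of `A` fixing
`B` pointwise has cardinality at most `[A:B]^(r²)`. -/
theorem stmt_7 (p : ℕ) (hp : p.Prime) (A : Type) [CommGroup A] [Finite A]
    (hA : IsPGroup p A) (B : Subgroup A) (r : ℕ)
    (hgen : ∃ s : Finset A, s.card ≤ r ∧ Subgroup.closure (s : Set A) = (⊤ : Subgroup A)) :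
    Nat.card {φ : MulAut A // ∀ b ∈ B, φ b = b} ≤ B.index ^ (r ^ 2) := by
  classical
  obtain ⟨s, hs_card, hs_cl⟩ := hgen
  set n := B.index with hn
  have hn0 : n ≠ 0 := B.index_ne_zero_of_finite
  haveI : NeZero n := ⟨hn0⟩
  -- generators as a function Fin r → A
  set l := s.toList with hl
  let g : Fin r → A := fun i => l.getD i 1
  have hsub : (s : Set A) ⊆ Set.range g := by
    intro x hx
    have hxl : x ∈ l := by rwa [hl, Finset.mem_toList]
    obtain ⟨j, hj, hget⟩ := List.getElem_of_mem hxl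
    have hjr : j < r := lt_of_lt_of_le (by simpa [hl] using hj) hs_card
    exact ⟨⟨j, hjr⟩, by simp [g, List.getD_eq_getElem?_getD, List.getElem?_eq_getElem hj, hget]⟩
  have hg_cl : Subgroup.closure (Set.range g) = ⊤ :=
    eq_top_iff.mpr (hs_cl ▸ Subgroup.closure_mono hsub)
  -- the "torsion" subtype
  let T := {a : A // a ^ n = 1}
  -- injection from automorphisms into (Fin r → T)
  have hgn : ∀ i, g i ^ n ∈ B := fun i => B.pow_index_mem (g i)
  let F : {φ : MulAut A // ∀ b ∈ B, φ b = b} → (Fin r → T) := fun φ i =>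
    ⟨φ.1 (g i) * (g i)⁻¹, by
      rw [mul_pow, inv_pow, ← map_pow, φ.2 _ (hgn i), mul_inv_cancel]⟩
  have hF : Function.Injective F := by
    intro φ₁ φ₂ h
    have heq : ∀ i, φ₁.1 (g i) = φ₂.1 (g i) := by
      intro i
      have := congrFun h i
      have := congrArg Subtype.val (congrFun h i)
      exact mul_right_cancel this
    have : (φ₁.1 : MulAut A).toMonoidHom = (φ₂.1 : MulAut A).toMonoidHom := by
      apply MonoidHom.eq_of_eqOn_dense hg_cl
      rintro x ⟨i, rfl⟩
      exact heq i
    exact Subtype.ext (MulEquiv.toMonoidHom_injective this)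
  -- bound the cardinality of T by n ^ r
  let σ : A →* A := powMonoidHom n
  have hT_ker : Nat.card T = Nat.card σ.ker := by
    apply Nat.card_congr
    apply Equiv.subtypeEquivRight
    intro a
    simp [σ, MonoidHom.mem_ker, powMonoidHom_apply]
  have hker_index : Nat.card σ.ker = σ.range.index := by
    have h1 : Nat.card σ.ker * σ.ker.index = Nat.card A := σ.ker.card_mul_index
    have h2 : Nat.card σ.range * σ.range.index = Nat.card A := σ.range.card_mul_index
    have h3 : σ.ker.index = Nat.card σ.range := Subgroup.index_ker σ
    have hpos : 0 < Nat.card σ.range := Nat.card_pos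
    rw [h3] at h1
    nlinarith [h1, h2]
  -- bound the index of σ.range using the quotient generated by images of g
  have hQ : σ.range.index ≤ n ^ r := by
    rw [Subgroup.index_eq_card]
    set Q := A ⧸ σ.range
    let q : Fin r → Q := fun i => QuotientGroup.mk (g i)
    have hq_cl : Subgroup.closure (Set.range q) = ⊤ := by
      have : Set.range q = ⇑(QuotientGroup.mk' σ.range) '' (Set.range g) := by
        ext x; constructor
        · rintro ⟨i, rfl⟩; exact ⟨g i, ⟨i, rfl⟩, rfl⟩
        · rintro ⟨a, ⟨i, rfl⟩, rfl⟩; exact ⟨i, rfl⟩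
      rw [this, ← MonoidHom.map_closure, hg_cl]
      exact Subgroup.map_top_of_surjective _ (QuotientGroup.mk'_surjective _)
    have hq_ord : ∀ i, q i ^ n = 1 := by
      intro i
      show (QuotientGroup.mk (g i) : Q) ^ n = 1
      rw [← QuotientGroup.mk_pow, QuotientGroup.eq_one_iff]
      exact ⟨g i, rfl⟩
    exact aux_card_le n r q hq_cl hq_ord
  -- put everything together
  calc Nat.card {φ : MulAut A // ∀ b ∈ B, φ b = b}
      ≤ Nat.card (Fin r → T) := Nat.card_le_card_of_injective F hF
    _ = Nat.card T ^ r := by simp [Nat.card_pi]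
    _ ≤ (n ^ r) ^ r := Nat.pow_le_pow_left (by rw [hT_ker, hker_index]; exact hQ) r
    _ = n ^ (r ^ 2) := by rw [← pow_mul, sq]
end

section
/- Let p be a prime, let G be a finite p-group, and let A ≤ G be a maximal normal abelian subgroup of G (i.e., A is normal and abelian and is maximal among such subgroups). Suppose A can be generated by r elements. Then for every abelian subgroup B ≤ G one has [G:A] ≤ [G:B]^{r²+1}. -/
open Subgroup Pointwise
open scoped IsMulCommutative

lemma aux_closure_card_le {M : Type*} [CommGroup M] [Finite M] (q : ℕ) (hq : q ≠ 0)
    (t : Finset M) (ht : ∀ x ∈ t, x ^ q = 1) :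
    Nat.card (Subgroup.closure (t : Set M)) ≤ q ^ t.card := by
  classical
  induction t using Finset.induction with
  | empty => simp [Subgroup.closure_empty]
  | @insert a t ha ih =>
    have h1 : (Subgroup.closure ((insert a t : Finset M) : Set M)) =
        Subgroup.zpowers a ⊔ Subgroup.closure (t : Set M) := by
      rw [Finset.coe_insert, Set.insert_eq, Subgroup.closure_union,
        ← Subgroup.zpowers_eq_closure]
    have h2 : ((Subgroup.zpowers a ⊔ Subgroup.closure (t : Set M) : Subgroup M) : Set M) =
        (Subgroup.zpowers a : Set M) * (Subgroup.closure (t : Set M) : Set M) :=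
      Subgroup.mul_normal _ _
    have h3 : Nat.card (Subgroup.zpowers a ⊔ Subgroup.closure (t : Set M) : Subgroup M) ≤
        Nat.card (Subgroup.zpowers a) * Nat.card (Subgroup.closure (t : Set M)) := by
      have := Set.natCard_mul_le (s := (Subgroup.zpowers a : Set M))
        (t := (Subgroup.closure (t : Set M) : Set M))
      rw [← h2] at this
      simpa using this
    have h4 : Nat.card (Subgroup.zpowers a) ≤ q := by
      rw [Nat.card_zpowers]
      exact Nat.le_of_dvd (Nat.pos_of_ne_zero hq)
        (orderOf_dvd_of_pow_eq_one (ht a (Finset.mem_insert_self a t)))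
    have h5 := ih (fun x hx => ht x (Finset.mem_insert_of_mem hx))
    rw [h1, Finset.card_insert_of_notMem ha, pow_succ']
    exact h3.trans (Nat.mul_le_mul h4 h5)

lemma aux_normal_center {p : ℕ} [Fact p.Prime] {Q : Type*} [Group Q] [Finite Q]
    (hQ : IsPGroup p Q) (N : Subgroup Q) [hN : N.Normal] (hNbot : N ≠ ⊥) :
    ∃ b : Q, b ∈ N ∧ b ∈ Subgroup.center Q ∧ b ≠ 1 := by
  classical
  have hP : IsPGroup p (ConjAct Q) := hQ.of_equiv ConjAct.toConjAct
  have hdvd : p ∣ Nat.card N := by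
    rcases (hQ.to_subgroup N).card_eq_or_dvd with h | h
    · exact absurd ((Subgroup.card_eq_one).mp h) hNbot
    · exact h
  have h1 : (1 : N) ∈ MulAction.fixedPoints (ConjAct Q) N := by
    intro g
    ext
    rw [ConjAct.Subgroup.val_conj_smul]
    simp
  obtain ⟨b, hb, hb1⟩ := hP.exists_fixed_point_of_prime_dvd_card_of_fixed_point (α := N) hdvd h1
  refine ⟨(b : Q), b.2, ?_, ?_⟩
  · rw [Subgroup.mem_center_iff]
    intro g
    have := hb (ConjAct.toConjAct g)
    have hv : g * (b : Q) * g⁻¹ = (b : Q) := by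
      have := congrArg Subtype.val this
      rwa [ConjAct.Subgroup.val_conj_smul, ConjAct.toConjAct_smul] at this
    calc g * b = (g * b * g⁻¹) * g := by group
    _ = b * g := by rw [hv]
  · intro h
    exact hb1 (by ext; simp [h])

lemma aux_centralizer_eq {p : ℕ} (hp : p.Prime) {G : Type} [Group G] [Finite G]
    (hG : IsPGroup p G) (A : Subgroup G) (hnormal : A.Normal) (hcomm : IsMulCommutative A)
    (hmax : ∀ A' : Subgroup G, A'.Normal → IsMulCommutative A' → A ≤ A' → A' = A) :
    Subgroup.centralizer (A : Set G) = A := by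
  classical
  haveI : Fact p.Prime := ⟨hp⟩
  haveI := hcomm
  haveI := hnormal
  set C := Subgroup.centralizer (A : Set G) with hC
  have hAC : A ≤ C := Subgroup.le_centralizer A
  refine le_antisymm ?_ hAC
  by_contra hle
  obtain ⟨x, hxC, hxA⟩ := SetLike.not_le_iff_exists.mp hle
  have hCnormal : C.Normal := by
    constructor
    intro c hc g
    rw [Subgroup.mem_centralizer_iff]
    intro h hh
    have hh' : g⁻¹ * h * g ∈ A := by
      have := hnormal.conj_mem h hh g⁻¹
      simpa [mul_assoc] using this
    have hcomm' : (g⁻¹ * h * g) * c = c * (g⁻¹ * h * g) :=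
      Subgroup.mem_centralizer_iff.mp hc _ hh'
    calc h * (g * c * g⁻¹) = g * ((g⁻¹ * h * g) * c) * g⁻¹ := by group
      _ = g * (c * (g⁻¹ * h * g)) * g⁻¹ := by rw [hcomm']
      _ = (g * c * g⁻¹) * h := by group
  set N := C.map (QuotientGroup.mk' A) with hN
  haveI : N.Normal := hCnormal.map _ (QuotientGroup.mk'_surjective A)
  have hNbot : N ≠ ⊥ := by
    intro h
    have hx : QuotientGroup.mk' A x ∈ N := Subgroup.mem_map_of_mem _ hxC
    rw [h, Subgroup.mem_bot] at hx
    exact hxA ((QuotientGroup.eq_one_iff x).mp hx)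
  obtain ⟨b, hbN, hbZ, hb1⟩ := aux_normal_center (hG.to_quotient A) N hNbot
  obtain ⟨y, hyC, hy⟩ := Subgroup.mem_map.mp hbN
  -- the preimage of ⟨b⟩
  set A' := (Subgroup.zpowers b).comap (QuotientGroup.mk' A) with hA'
  have hAle : A ≤ A' := by
    intro a ha
    have : QuotientGroup.mk' A a = 1 := (QuotientGroup.eq_one_iff a).mpr ha
    exact Subgroup.mem_comap.mpr (by rw [this]; exact Subgroup.one_mem _)
  have hzb : (Subgroup.zpowers b).Normal := by
    constructor
    intro n hn g
    obtain ⟨k, hk⟩ := hn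
    have hk' : b ^ k = n := hk
    have hbk : b ^ k ∈ Subgroup.center _ := Subgroup.zpow_mem _ hbZ k
    have heq : g * n * g⁻¹ = n := by
      rw [← hk']
      have h2 := Subgroup.mem_center_iff.mp hbk g
      rw [h2]
      group
    rw [heq]; exact ⟨k, hk⟩
  have hA'normal : A'.Normal := hzb.comap _
  -- every element of A' has the form y ^ k * a with a ∈ A
  have hform : ∀ g ∈ A', ∃ (k : ℤ) (a : G), a ∈ A ∧ g = y ^ k * a := by
    intro g hg
    obtain ⟨k, hk⟩ := Subgroup.mem_comap.mp hg
    have hk' : b ^ k = QuotientGroup.mk' A g := hk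
    refine ⟨k, (y ^ k)⁻¹ * g, ?_, by group⟩
    rw [← QuotientGroup.eq_one_iff]
    show QuotientGroup.mk' A ((y ^ k)⁻¹ * g) = 1
    have hyk : QuotientGroup.mk' A (y ^ k) = b ^ k := by rw [map_zpow, hy]
    rw [map_mul, map_inv, hyk, ← hk']
    group
  have hycomm : ∀ a ∈ A, Commute a y := fun a ha =>
    Subgroup.mem_centralizer_iff.mp hyC a ha
  have hA'comm : IsMulCommutative A' := by
    constructor
    constructor
    rintro ⟨g, hg⟩ ⟨h, hh⟩
    apply Subtype.ext
    show g * h = h * g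
    obtain ⟨k, a, ha, rfl⟩ := hform g hg
    obtain ⟨l, a', ha', rfl⟩ := hform h hh
    have c1 : Commute a (y ^ l) := (hycomm a ha).zpow_right l
    have c2 : Commute a' (y ^ k) := (hycomm a' ha').zpow_right k
    have c3 : Commute a a' := Subgroup.mul_comm_of_mem_isMulCommutative A ha ha'
    have c4 : Commute (y ^ k) (y ^ l) := (Commute.refl y).zpow_zpow k l
    calc y ^ k * a * (y ^ l * a') = y ^ k * (a * y ^ l) * a' := by group
      _ = y ^ k * (y ^ l * a) * a' := by rw [c1]
      _ = (y ^ k * y ^ l) * (a * a') := by group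
      _ = (y ^ l * y ^ k) * (a' * a) := by rw [c4, c3]
      _ = y ^ l * (a' * y ^ k) * a := by rw [c2]; group
      _ = y ^ l * a' * (y ^ k * a) := by group
  have := hmax A' hA'normal hA'comm hAle
  have hyA' : y ∈ A' := Subgroup.mem_comap.mpr (by rw [hy]; exact Subgroup.mem_zpowers b)
  rw [this] at hyA'
  apply hb1
  rw [← hy]
  exact (QuotientGroup.eq_one_iff y).mpr hyA'

/-- **Lemma (index of a maximal normal abelian subgroup of a `p`-group).**
Let `G` be a finite `p`-group and let `A ≤ G` be a maximal normal abelian subgroup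
(normal, abelian, and maximal among such subgroups), generated by `r` elements.
Then for every abelian subgroup `B ≤ G` one has `[G:A] ≤ [G:B]^(r²+1)`. -/
theorem stmt_8 (p : ℕ) (hp : p.Prime) (G : Type) [Group G] [Finite G]
    (hG : IsPGroup p G) (A : Subgroup G)
    (hnormal : A.Normal) (hcomm : IsMulCommutative A)
    (hmax : ∀ A' : Subgroup G, A'.Normal → IsMulCommutative A' → A ≤ A' → A' = A)
    (r : ℕ)
    (hgen : ∃ s : Finset G, s.card ≤ r ∧ Subgroup.closure (s : Set G) = A)
    (B : Subgroup G) (hB : IsMulCommutative B) :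
    A.index ≤ B.index ^ (r ^ 2 + 1) := by
  classical
  haveI : Fact p.Prime := ⟨hp⟩
  haveI := hcomm
  haveI := hnormal
  haveI := hB
  obtain ⟨s, hs_card, hs_clo⟩ := hgen
  set q := B.index with hqdef
  have hq0 : q ≠ 0 := Subgroup.index_ne_zero_of_finite
  -- Step A : q-th powers of elements of A lie in B
  have hpow_mem : ∀ a ∈ A, a ^ q ∈ B := by
    intro a ha
    set m := B.relIndex A with hm
    have hmB : a ^ m ∈ B := by
      have h1 : (⟨a, ha⟩ : ↥A) ^ m ∈ B.subgroupOf A :=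
        (B.subgroupOf A).pow_index_mem (⟨a, ha⟩ : ↥A)
      have := Subgroup.mem_subgroupOf.mp h1
      simpa using this
    have hmq : m ∣ q := by
      have hmle : m ≤ q := by
        rw [hm, hqdef, ← Subgroup.relIndex_top_right (H := B)]
        exact Subgroup.relIndex_le_of_le_right le_top
          (by rw [Subgroup.relIndex_top_right]; exact hq0)
      haveI : (B.subgroupOf A).FiniteIndex := ⟨Subgroup.index_ne_zero_of_finite⟩
      haveI : B.FiniteIndex := ⟨hq0⟩
      obtain ⟨i, hi⟩ := (hG.to_subgroup A).index (B.subgroupOf A)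
      obtain ⟨j, hj⟩ := hG.index B
      have hm' : m = p ^ i := hi
      have hq' : q = p ^ j := hj
      rw [hm', hq'] at hmle ⊢
      exact pow_dvd_pow p ((Nat.pow_le_pow_iff_right hp.one_lt).mp hmle)
    have : a ^ q = (a ^ m) ^ (q / m) := by
      rw [← pow_mul, Nat.mul_div_cancel' hmq]
    rw [this]
    exact Subgroup.pow_mem B hmB _
  have hsub : ∀ x ∈ s, x ∈ A := fun x hx => hs_clo ▸ Subgroup.subset_closure hx
  set f : ↥A →* ↥A := powMonoidHom q with hf
  set Aq : Subgroup G := f.range.map A.subtype with hAqdef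
  have hAq_mem : ∀ x : G, x ∈ Aq ↔ ∃ a ∈ A, a ^ q = x := by
    intro x
    constructor
    · rintro ⟨u, ⟨v, rfl⟩, rfl⟩
      exact ⟨(v : G), v.2, by simp [hf, powMonoidHom_apply]⟩
    · rintro ⟨a, ha, rfl⟩
      exact ⟨f ⟨a, ha⟩, ⟨⟨a, ha⟩, rfl⟩, by simp [hf, powMonoidHom_apply]⟩
  set K := Subgroup.centralizer (Aq : Set G) with hK
  have hBK : B ≤ K := by
    intro b hb
    rw [hK, Subgroup.mem_centralizer_iff]
    intro h hh
    obtain ⟨a, ha, rfl⟩ := (hAq_mem h).mp hh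
    exact Subgroup.mul_comm_of_mem_isMulCommutative B (hpow_mem a ha) hb
  have hAK : A ≤ K := by
    intro a' ha'
    rw [hK, Subgroup.mem_centralizer_iff]
    intro h hh
    obtain ⟨a, ha, rfl⟩ := (hAq_mem h).mp hh
    exact Subgroup.mul_comm_of_mem_isMulCommutative A (Subgroup.pow_mem A ha q) ha'
  have hcent : Subgroup.centralizer ((A : Set G)) = A :=
    aux_centralizer_eq hp hG A hnormal hcomm hmax
  -- the q-torsion subgroup of A
  set T : Subgroup G := f.ker.map A.subtype with hT
  -- |T| ≤ q ^ r
  have hTcard : Nat.card T ≤ q ^ r := by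
    have h1 : Nat.card T = Nat.card f.ker :=
      (Nat.card_congr (Subgroup.equivMapOfInjective f.ker A.subtype
        A.subtype_injective).toEquiv).symm
    have h2 : Nat.card (↥A) = Nat.card (↥A ⧸ f.ker) * Nat.card f.ker :=
      Subgroup.card_eq_card_quotient_mul_card_subgroup f.ker
    have h3 : Nat.card (↥A ⧸ f.ker) = Nat.card f.range :=
      Nat.card_congr (QuotientGroup.quotientKerEquivRange f).toEquiv
    have h4 : f.range.index * Nat.card f.range = Nat.card (↥A) :=
      Subgroup.index_mul_card f.range
    have hker : Nat.card f.ker = f.range.index := by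
      have hrangepos : 0 < Nat.card f.range := Nat.card_pos
      have h5 : f.range.index * Nat.card f.range = Nat.card f.range * Nat.card f.ker := by
        rw [h4, h2, h3]
      have h6 : Nat.card f.range * f.range.index = Nat.card f.range * Nat.card f.ker := by
        rw [mul_comm (Nat.card ↥f.range) f.range.index]
        exact h5
      exact (Nat.eq_of_mul_eq_mul_left hrangepos h6).symm
    -- bound the index of the q-th power subgroup
    set t : Finset ↥A := s.attach.image (fun x => (⟨x.1, hsub x.1 x.2⟩ : ↥A)) with ht
    have htcard : t.card ≤ r := le_trans (Finset.card_image_le.trans (by simp)) hs_card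
    have himage : A.subtype '' (t : Set ↥A) = (s : Set G) := by
      ext g
      constructor
      · rintro ⟨y, hy, rfl⟩
        obtain ⟨x, -, rfl⟩ := Finset.mem_image.mp (Finset.mem_coe.mp hy)
        exact x.2
      · intro hg
        have hg' : g ∈ s := hg
        exact ⟨⟨g, hsub g hg'⟩, Finset.mem_coe.mpr (Finset.mem_image.mpr
          ⟨⟨g, hg'⟩, Finset.mem_attach _ _, rfl⟩), rfl⟩
    have hclot : Subgroup.closure (t : Set ↥A) = ⊤ := by
      apply Subgroup.map_injective A.subtype_injective
      rw [MonoidHom.map_closure, himage, hs_clo, ← MonoidHom.range_eq_map,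
        Subgroup.range_subtype]
    have hidx : f.range.index ≤ q ^ r := by
      rw [Subgroup.index_eq_card]
      set π := QuotientGroup.mk' f.range with hπ
      set tbar : Finset (↥A ⧸ f.range) := t.image π with htbar
      have htbar_pow : ∀ x ∈ tbar, x ^ q = 1 := by
        intro x hx
        obtain ⟨y, hy, rfl⟩ := Finset.mem_image.mp hx
        rw [hπ, ← map_pow]
        exact (QuotientGroup.eq_one_iff _).mpr ⟨y, rfl⟩
      have hclosure : Subgroup.closure (tbar : Set (↥A ⧸ f.range)) = ⊤ := by
        rw [htbar, Finset.coe_image, ← MonoidHom.map_closure, hclot]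
        exact Subgroup.map_top_of_surjective π (QuotientGroup.mk'_surjective _)
      have := aux_closure_card_le q hq0 tbar htbar_pow
      rw [hclosure] at this
      calc Nat.card (↥A ⧸ f.range) = Nat.card (⊤ : Subgroup (↥A ⧸ f.range)) :=
            (Nat.card_congr Subgroup.topEquiv.toEquiv).symm
        _ ≤ q ^ tbar.card := this
        _ ≤ q ^ r := Nat.pow_le_pow_right (Nat.pos_of_ne_zero hq0)
            (le_trans Finset.card_image_le htcard)
    rw [h1, hker]
    exact hidx
  -- values of the commutator map lie in T
  have hval : ∀ (x : ↥K) (a : G), a ∈ A →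
      a⁻¹ * ((x : G) * a * (x : G)⁻¹) ∈ T := by
    intro x a haA
    have hconj : (x : G) * a * (x : G)⁻¹ ∈ A := hnormal.conj_mem a haA (x : G)
    have hvalA : a⁻¹ * ((x : G) * a * (x : G)⁻¹) ∈ A :=
      Subgroup.mul_mem A (Subgroup.inv_mem A haA) hconj
    have hc : Commute a⁻¹ ((x : G) * a * (x : G)⁻¹) :=
      Subgroup.mul_comm_of_mem_isMulCommutative A (Subgroup.inv_mem A haA) hconj
    have hxaq : (x : G) * a ^ q * (x : G)⁻¹ = a ^ q := by
      have hmem : a ^ q ∈ Aq := (hAq_mem _).mpr ⟨a, haA, rfl⟩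
      have := Subgroup.mem_centralizer_iff.mp x.2 _ hmem
      rw [← this]
      group
    have hpow1 : (a⁻¹ * ((x : G) * a * (x : G)⁻¹)) ^ q = 1 := by
      rw [hc.mul_pow, conj_pow, hxaq, inv_pow, inv_mul_cancel]
    have hkmem : (⟨_, hvalA⟩ : ↥A) ∈ f.ker := by
      rw [MonoidHom.mem_ker]
      ext
      simpa [hf, powMonoidHom_apply] using hpow1
    exact ⟨⟨_, hvalA⟩, hkmem, rfl⟩
  -- the injection from K ⧸ A into functions s → T
  have hrel : A.relIndex K ≤ q ^ (r * r) := by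
    let Φ0 : ↥K → ({x : G // x ∈ s} → ↥T) := fun x a =>
      ⟨(a : G)⁻¹ * ((x : G) * (a : G) * (x : G)⁻¹), hval x a (hsub a a.2)⟩
    have hwd : ∀ x y : ↥K, (@Setoid.r _ (QuotientGroup.leftRel (A.subgroupOf K)) x y) →
        Φ0 x = Φ0 y := by
      intro x y hxy
      have hc : ((x⁻¹ * y : ↥K) : G) ∈ A :=
        Subgroup.mem_subgroupOf.mp (QuotientGroup.leftRel_apply.mp hxy)
      have hyx : (y : G) = (x : G) * ((x : G)⁻¹ * (y : G)) := by group
      funext a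
      apply Subtype.ext
      show (a : G)⁻¹ * ((x : G) * (a : G) * (x : G)⁻¹)
          = (a : G)⁻¹ * ((y : G) * (a : G) * (y : G)⁻¹)
      set c : G := (x : G)⁻¹ * (y : G) with hcdef
      have hcA : c ∈ A := hc
      have hca : c * (a : G) = (a : G) * c :=
        Subgroup.mul_comm_of_mem_isMulCommutative A hcA (hsub a a.2)
      have hcac : c * (a : G) * c⁻¹ = (a : G) := by rw [hca]; group
      calc (a : G)⁻¹ * ((x : G) * (a : G) * (x : G)⁻¹)
          = (a : G)⁻¹ * ((x : G) * (c * (a : G) * c⁻¹) * (x : G)⁻¹) := by rw [hcac]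
        _ = (a : G)⁻¹ * (((x : G) * c) * (a : G) * ((x : G) * c)⁻¹) := by group
        _ = (a : G)⁻¹ * ((y : G) * (a : G) * (y : G)⁻¹) := by
            rw [hcdef, ← hyx]
    let Φ : (↥K ⧸ A.subgroupOf K) → ({x : G // x ∈ s} → ↥T) :=
      fun z => Quotient.liftOn' z Φ0 hwd
    have hΦinj : Function.Injective Φ := by
      intro z w
      induction z using Quotient.inductionOn'
      induction w using Quotient.inductionOn'
      rename_i x y
      intro hxy
      have hxy' : Φ0 x = Φ0 y := hxy
      apply Quotient.sound'
      rw [QuotientGroup.leftRel_apply]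
      set z : G := (y : G)⁻¹ * (x : G) with hzdef
      have hcommz : ∀ a ∈ s, z * a = a * z := by
        intro a ha
        have h0 := congrArg Subtype.val (congrFun hxy' ⟨a, ha⟩)
        have h1 : (a : G)⁻¹ * ((x : G) * a * (x : G)⁻¹)
            = (a : G)⁻¹ * ((y : G) * a * (y : G)⁻¹) := h0
        have h2 : (x : G) * a * (x : G)⁻¹ = (y : G) * a * (y : G)⁻¹ :=
          mul_left_cancel h1
        calc z * a = (y : G)⁻¹ * ((x : G) * a * (x : G)⁻¹) * (x : G) := by
              rw [hzdef]; group
          _ = (y : G)⁻¹ * ((y : G) * a * (y : G)⁻¹) * (x : G) := by rw [h2]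
          _ = a * z := by rw [hzdef]; group
      have hAcent : A ≤ Subgroup.centralizer {z} := by
        rw [← hs_clo]
        apply (Subgroup.closure_le _).mpr
        intro a ha
        rw [SetLike.mem_coe, Subgroup.mem_centralizer_iff]
        intro h hh
        rw [Set.mem_singleton_iff] at hh
        rw [hh]
        exact hcommz a ha
      have hzA : z ∈ A := by
        rw [← hcent, Subgroup.mem_centralizer_iff]
        intro h hh
        have := Subgroup.mem_centralizer_iff.mp (hAcent hh) z rfl
        exact this.symm
      have : ((x⁻¹ * y : ↥K) : G) ∈ A := by
        have : ((x⁻¹ * y : ↥K) : G) = z⁻¹ := by rw [hzdef]; push_cast; group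
        rw [this]
        exact Subgroup.inv_mem A hzA
      exact Subgroup.mem_subgroupOf.mpr this
    have hcard1 : A.relIndex K = Nat.card (↥K ⧸ A.subgroupOf K) :=
      Subgroup.index_eq_card _
    have hcard2 : Nat.card (↥K ⧸ A.subgroupOf K) ≤
        Nat.card ({x : G // x ∈ s} → ↥T) :=
      Nat.card_le_card_of_injective Φ hΦinj
    have hcard3 : Nat.card ({x : G // x ∈ s} → ↥T) = Nat.card ↥T ^ s.card := by
      rw [Nat.card_fun, Nat.card_eq_finsetCard]
    calc A.relIndex K ≤ Nat.card ↥T ^ s.card := by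
          rw [hcard1, ← hcard3]; exact hcard2
      _ ≤ (q ^ r) ^ s.card := Nat.pow_le_pow_left hTcard _
      _ ≤ (q ^ r) ^ r := Nat.pow_le_pow_right
          (Nat.pos_of_ne_zero (pow_ne_zero r hq0)) hs_card
      _ = q ^ (r * r) := by rw [← pow_mul]
  have hKind : K.index ≤ q :=
    Nat.le_of_dvd (Nat.pos_of_ne_zero hq0) (Subgroup.index_dvd_of_le hBK)
  calc A.index = A.relIndex K * K.index := (Subgroup.relIndex_mul_index hAK).symm
    _ ≤ q ^ (r * r) * q := Nat.mul_le_mul hrel hKind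
    _ = q ^ (r ^ 2 + 1) := by rw [pow_succ, pow_two]
end

section
/- There exists a universal constant C with the following property: for every connected smooth 4-manifold X and every finite group G acting smoothly and effectively on X such that the global fixed-point set X^G = {x ∈ X : g·x = x for all g ∈ G} is nonempty, there exists an abelian subgroup A ≤ G with [G:A] ≤ C. -/
open scoped Manifold

open scoped RealInnerProductSpace
open Filter Topology

noncomputable section

namespace Stmt9

section PartA

abbrev E4 : Type := EuclideanSpace ℝ (Fin 4)
abbrev CLM : Type := E4 →L[ℝ] E4
abbrev LI : Type := E4 ≃ₗᵢ[ℝ] E4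

variable {Γ : Type} [Group Γ] [Fintype Γ]

def Esyn (_ρ : Γ →* CLMˣ) : Type := E4

variable (ρ : Γ →* CLMˣ)

instance : AddCommGroup (Esyn ρ) := inferInstanceAs (AddCommGroup E4)
instance : Module ℝ (Esyn ρ) := inferInstanceAs (Module ℝ E4)

def toE4 (v : Esyn ρ) : E4 := v
def ofE4 (v : E4) : Esyn ρ := v

instance escore : InnerProductSpace.Core ℝ (Esyn ρ) where
  inner v w := ∑ g : Γ, ⟪(ρ g : CLM) (toE4 ρ v), (ρ g : CLM) (toE4 ρ w)⟫
  conj_inner_symm v w := by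
    simp only [starRingEnd_apply, star_trivial]
    exact Finset.sum_congr rfl fun g _ => real_inner_comm _ _
  re_inner_nonneg v := by
    simp only [RCLike.re_to_real]
    exact Finset.sum_nonneg fun g _ => real_inner_self_nonneg
  add_left v w z := by
    have : ∀ g : Γ, (ρ g : CLM) (toE4 ρ (v + w)) = (ρ g : CLM) (toE4 ρ v) + (ρ g : CLM) (toE4 ρ w) := by
      intro g; rw [show toE4 ρ (v + w) = toE4 ρ v + toE4 ρ w from rfl, map_add]
    simp only [this, inner_add_left, Finset.sum_add_distrib]
  smul_left v w r := by
    have : ∀ g : Γ, (ρ g : CLM) (toE4 ρ (r • v)) = r • (ρ g : CLM) (toE4 ρ v) := by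
      intro g; rw [show toE4 ρ (r • v) = r • toE4 ρ v from rfl, map_smul]
    simp only [this, real_inner_smul_left, Finset.mul_sum]
    simp
  definite v hv := by
    have h0 : ∀ g ∈ Finset.univ, (0:ℝ) ≤ ⟪(ρ g : CLM) (toE4 ρ v), (ρ g : CLM) (toE4 ρ v)⟫ :=
      fun g _ => real_inner_self_nonneg
    have := (Finset.sum_eq_zero_iff_of_nonneg h0).mp hv 1 (Finset.mem_univ 1)
    have h1 : (ρ (1:Γ) : CLM) (toE4 ρ v) = toE4 ρ v := by
      rw [map_one]; rfl
    rw [h1, real_inner_self_eq_norm_sq] at this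
    have hv0 : ‖toE4 ρ v‖ = 0 := by nlinarith [norm_nonneg (toE4 ρ v)]
    exact norm_eq_zero.mp hv0

instance esnormed : NormedAddCommGroup (Esyn ρ) := @InnerProductSpace.Core.toNormedAddCommGroup ℝ (Esyn ρ) _ _ _ (escore ρ)
instance esinner : InnerProductSpace ℝ (Esyn ρ) := by exact InnerProductSpace.ofCore (escore ρ).toCore
instance : FiniteDimensional ℝ (Esyn ρ) := inferInstanceAs (FiniteDimensional ℝ E4)


lemma esinner_def (v w : Esyn ρ) :
    ⟪v, w⟫ = ∑ g : Γ, ⟪(ρ g : CLM) (toE4 ρ v), (ρ g : CLM) (toE4 ρ w)⟫ := rfl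

lemma es_invariant (h : Γ) (v w : Esyn ρ) :
    (∑ g : Γ, ⟪(ρ g : CLM) ((ρ h : CLM) (toE4 ρ v)), (ρ g : CLM) ((ρ h : CLM) (toE4 ρ w))⟫)
      = ⟪v, w⟫ := by
  rw [esinner_def]
  refine Fintype.sum_equiv (Equiv.mulRight h) _ _ fun g => ?_
  have : ∀ u : E4, (ρ (g * h) : CLM) u = (ρ g : CLM) ((ρ h : CLM) u) := by
    intro u
    rw [map_mul ρ g h, Units.val_mul, ContinuousLinearMap.mul_apply]
  simp [Equiv.coe_mulRight, this]

lemma rho_mul_apply (g h : Γ) (u : E4) :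
    (ρ g : CLM) ((ρ h : CLM) u) = (ρ (g * h) : CLM) u := by
  rw [map_mul ρ g h, Units.val_mul, ContinuousLinearMap.mul_apply]

lemma rho_one_apply (u : E4) : (ρ (1 : Γ) : CLM) u = u := by
  rw [map_one]; rfl

def liOf (g : Γ) : Esyn ρ ≃ₗᵢ[ℝ] Esyn ρ where
  toFun v := ofE4 ρ ((ρ g : CLM) (toE4 ρ v))
  invFun v := ofE4 ρ ((ρ g⁻¹ : CLM) (toE4 ρ v))
  map_add' v w := by
    show ofE4 ρ ((ρ g : CLM) (toE4 ρ v + toE4 ρ w)) = _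
    rw [map_add]; rfl
  map_smul' r v := by
    show ofE4 ρ ((ρ g : CLM) (r • toE4 ρ v)) = _
    rw [map_smul]; rfl
  left_inv v := by
    show ofE4 ρ ((ρ g⁻¹ : CLM) ((ρ g : CLM) (toE4 ρ v))) = v
    rw [rho_mul_apply, inv_mul_cancel, rho_one_apply]; rfl
  right_inv v := by
    show ofE4 ρ ((ρ g : CLM) ((ρ g⁻¹ : CLM) (toE4 ρ v))) = v
    rw [rho_mul_apply, mul_inv_cancel, rho_one_apply]; rfl
  norm_map' := by
    intro v
    show ‖ofE4 ρ ((ρ g : CLM) (toE4 ρ v))‖ = ‖v‖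
    set w := ofE4 ρ ((ρ g : CLM) (toE4 ρ v)) with hw
    have e1 : ⟪w, w⟫ = ∑ g' : Γ, ⟪(ρ g' : CLM) ((ρ g : CLM) (toE4 ρ v)),
        (ρ g' : CLM) ((ρ g : CLM) (toE4 ρ v))⟫ := rfl
    have e2 : ⟪w, w⟫ = ⟪v, v⟫ := by rw [e1]; exact es_invariant ρ g v v
    have h1 : ⟪w, w⟫ = ‖w‖ ^ 2 := real_inner_self_eq_norm_sq _
    have h2 : ⟪v, v⟫ = ‖v‖ ^ 2 := real_inner_self_eq_norm_sq _
    nlinarith [norm_nonneg w, norm_nonneg v]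

lemma liOf_apply (g : Γ) (v : Esyn ρ) : liOf ρ g v = ofE4 ρ ((ρ g : CLM) (toE4 ρ v)) := rfl

def sigma0 : Γ →* (Esyn ρ ≃ₗᵢ[ℝ] Esyn ρ) where
  toFun := liOf ρ
  map_one' := by
    ext v
    rw [LinearIsometryEquiv.coe_one, liOf_apply, rho_one_apply]
    rfl
  map_mul' g h := by
    ext v
    rw [LinearIsometryEquiv.coe_mul, Function.comp_apply, liOf_apply, liOf_apply, liOf_apply]
    show ofE4 ρ ((ρ (g * h) : CLM) (toE4 ρ v)) = ofE4 ρ ((ρ g : CLM) ((ρ h : CLM) (toE4 ρ v)))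
    rw [rho_mul_apply]

lemma finrank_esyn : Module.finrank ℝ (Esyn ρ) = 4 := finrank_euclideanSpace_fin (𝕜 := ℝ) (n := 4)

def Jiso : Esyn ρ ≃ₗᵢ[ℝ] E4 :=
  (stdOrthonormalBasis ℝ (Esyn ρ)).repr.trans
    (LinearIsometryEquiv.piLpCongrLeft 2 ℝ ℝ (finCongr (finrank_esyn ρ)))

def sigma : Γ →* LI where
  toFun g := ((Jiso ρ).symm.trans ((sigma0 ρ g).trans (Jiso ρ)))
  map_one' := by
    ext v
    simp [LinearIsometryEquiv.trans_apply]
  map_mul' g h := by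
    ext v
    simp only [map_mul, LinearIsometryEquiv.trans_apply, LinearIsometryEquiv.coe_mul,
      Function.comp_apply, LinearIsometryEquiv.symm_apply_apply]

lemma sigma_injective (hρ : Function.Injective ρ) : Function.Injective (sigma ρ) := by
  intro g h hgh
  apply hρ
  apply Units.ext
  apply ContinuousLinearMap.ext
  intro v
  have h1 : ∀ v : Esyn ρ, sigma0 ρ g v = sigma0 ρ h v := by
    intro w
    have := congrArg (fun (e : LI) => (Jiso ρ).symm (e ((Jiso ρ) w))) hgh
    simpa [sigma, LinearIsometryEquiv.trans_apply] using this
  exact h1 v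


def clmHom : LI →* CLM where
  toFun a := a.toLinearIsometry.toContinuousLinearMap
  map_one' := by
    ext v
    simp [LinearIsometry.coe_toContinuousLinearMap]
  map_mul' a b := by
    ext v
    simp [LinearIsometry.coe_toContinuousLinearMap, ContinuousLinearMap.mul_apply]

lemma clmHom_apply (a : LI) (v : E4) : clmHom a v = a v := by
  simp [clmHom, LinearIsometry.coe_toContinuousLinearMap]

lemma clmHom_norm_le (a : LI) : ‖clmHom a‖ ≤ 1 :=
  ContinuousLinearMap.opNorm_le_bound _ zero_le_one (fun v => by
    rw [clmHom_apply, a.norm_map, one_mul])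

lemma clmHom_injective : Function.Injective clmHom := by
  intro a b h
  apply LinearIsometryEquiv.ext
  intro v
  have := congrArg (fun (T : CLM) => T v) h
  simpa [clmHom_apply] using this

lemma comm_est {A B A' B' : CLM} (hA : A' * A = 1) (hB : B' * B = 1)
    (hA' : ‖A'‖ ≤ 1) (hB' : ‖B'‖ ≤ 1) :
    ‖A' * B' * A * B - 1‖ ≤ 2 * (‖A - 1‖ * ‖B - 1‖) := by
  have key : A' * B' * A * B - 1 = A' * (B' * (A * B - B * A)) := by
    have expand : A' * (B' * (A * B - B * A)) = A' * (B' * (A * B)) - A' * (B' * B * A) := by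
      rw [mul_sub B' (A * B) (B * A), mul_sub A', mul_assoc B' B A]
    rw [expand, hB, one_mul, hA, ← mul_assoc, ← mul_assoc]
  have comm2 : A * B - B * A = (A - 1) * (B - 1) - (B - 1) * (A - 1) := by
    have e1 : (A - 1) * (B - 1) = A * B - A - B + 1 := by
      rw [sub_mul, mul_sub, mul_sub, mul_one, one_mul, mul_one]; abel
    have e2 : (B - 1) * (A - 1) = B * A - B - A + 1 := by
      rw [sub_mul, mul_sub, mul_sub, mul_one, one_mul, mul_one]; abel
    rw [e1, e2]; abel
  rw [key]
  have h1 : ‖A * B - B * A‖ ≤ 2 * (‖A - 1‖ * ‖B - 1‖) := by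
    rw [comm2]
    refine le_trans (norm_sub_le _ _) ?_
    have i1 := norm_mul_le (A - 1) (B - 1)
    have i2 := norm_mul_le (B - 1) (A - 1)
    nlinarith [norm_nonneg (A - 1), norm_nonneg (B - 1)]
  calc ‖A' * (B' * (A * B - B * A))‖ ≤ ‖A'‖ * ‖B' * (A * B - B * A)‖ := norm_mul_le _ _
    _ ≤ ‖A'‖ * (‖B'‖ * ‖A * B - B * A‖) := by
        have := norm_mul_le B' (A * B - B * A)
        nlinarith [norm_nonneg A']
    _ ≤ 1 * (1 * ‖A * B - B * A‖) := by
        have h0 := norm_nonneg (A * B - B * A)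
        have h1 : ‖B'‖ * ‖A * B - B * A‖ ≤ 1 * ‖A * B - B * A‖ :=
          mul_le_mul_of_nonneg_right hB' h0
        have h2 : (0:ℝ) ≤ ‖B'‖ * ‖A * B - B * A‖ := mul_nonneg (norm_nonneg _) h0
        nlinarith [norm_nonneg A']
    _ = ‖A * B - B * A‖ := by ring
    _ ≤ _ := h1

lemma clm_norm_smul_le (r : ℝ) (x : CLM) : ‖r • x‖ ≤ ‖r‖ * ‖x‖ := norm_smul_le r x

theorem closure_isCommutative {G : Type*} [Group G] {k : Set G}
    (hcomm : ∀ x ∈ k, ∀ y ∈ k, x * y = y * x) : IsMulCommutative (Subgroup.closure k) :=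
  ⟨⟨fun x y => Subtype.ext (Set.centralizer_centralizer_comm_of_comm hcomm _
      (Subgroup.closure_le_centralizer_centralizer k x.2) _
      (Subgroup.closure_le_centralizer_centralizer k y.2))⟩⟩


set_option maxHeartbeats 2000000 in
theorem jordan4 : ∃ C : ℕ, 0 < C ∧ ∀ (Γ : Type) (_ : Group Γ) (_ : Finite Γ)
    (ρ : Γ →* CLMˣ), Function.Injective ρ →
    ∃ A : Subgroup Γ, IsMulCommutative A ∧ A.index ≤ C := by
  classical
  obtain ⟨t, ht⟩ : ∃ t : Finset CLM,
      Metric.closedBall (0:CLM) 1 ⊆ ⋃ p ∈ t, Metric.ball p (1/10) := by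
    have hc : IsCompact (Metric.closedBall (0:CLM) 1) := isCompact_closedBall _ _
    exact hc.elim_finite_subcover (fun p : CLM => Metric.ball p (1/10))
      (fun _ => Metric.isOpen_ball)
      (fun x _ => Set.mem_iUnion.mpr ⟨x, Metric.mem_ball_self (by norm_num)⟩)
  refine ⟨t.card + 1, Nat.succ_pos _, ?_⟩
  intro Γ _ _ ρ hρ
  letI : Fintype Γ := Fintype.ofFinite Γ
  haveI hscc : SMulCommClass ℝ CLM CLM := Algebra.to_smulCommClass (R := ℝ) (A := CLM)
  set cl : Γ →* CLM := clmHom.comp (sigma ρ) with hcl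
  have hclinj : Function.Injective cl := fun a b h =>
    sigma_injective ρ hρ (clmHom_injective h)
  set N : Γ → ℝ := fun g => ‖cl g - 1‖ with hN
  have hNle : ∀ g : Γ, ‖cl g‖ ≤ 1 := fun g => clmHom_norm_le _
  have hinv : ∀ g : Γ, cl g⁻¹ * cl g = 1 := fun g => by
    rw [← map_mul, inv_mul_cancel, map_one]
  have hNpos : ∀ g : Γ, g ≠ 1 → 0 < N g := by
    intro g hg
    rcases (norm_nonneg (cl g - 1)).lt_or_eq with h | h
    · exact h
    · exfalso
      apply hg
      apply hclinj
      rw [map_one, ← sub_eq_zero]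
      exact (norm_eq_zero.mp h.symm)
  have hNbd : ∀ g : Γ, ‖cl g - 1‖ ≤ 2 := by
    intro g
    refine le_trans (norm_sub_le _ _) ?_
    have : ‖(1:CLM)‖ ≤ 1 := ContinuousLinearMap.norm_id_le
    linarith [hNle g]
  -- key commuting lemma
  have key : ∀ a b : Γ, N a < 1/5 → N b < 1/5 → a * b = b * a := by
    by_contra hk
    push_neg at hk
    set P := Finset.univ.filter
      (fun p : Γ × Γ => N p.1 < 1/5 ∧ N p.2 < 1/5 ∧ p.1 * p.2 ≠ p.2 * p.1) with hP
    have hPne : P.Nonempty := by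
      obtain ⟨a, b, h1, h2, h3⟩ := hk
      exact ⟨(a, b), by simp only [hP, Finset.mem_filter, Finset.mem_univ, true_and]
                        exact ⟨h1, h2, h3⟩⟩
    obtain ⟨⟨a, b⟩, habP, hmin⟩ := P.exists_min_image (fun p => N p.1 + N p.2) hPne
    rw [hP, Finset.mem_filter] at habP
    obtain ⟨-, hNa, hNb, hab⟩ := habP
    have hane : a ≠ 1 := fun h => hab (by rw [h, one_mul, mul_one])
    have hbne : b ≠ 1 := fun h => hab (by rw [h, one_mul, mul_one])
    have hNapos := hNpos a hane
    have hNbpos := hNpos b hbne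
    set c := a⁻¹ * b⁻¹ * a * b with hc
    have hclc : cl c = cl a⁻¹ * cl b⁻¹ * cl a * cl b := by
      rw [hc, map_mul, map_mul, map_mul]
    have hcb : N c ≤ 2 * (N a * N b) := by
      show ‖cl c - 1‖ ≤ 2 * (‖cl a - 1‖ * ‖cl b - 1‖)
      rw [hclc]
      exact comm_est (hinv a) (hinv b) (hNle _) (hNle _)
    have hNc_lt_b : N c < N b := by nlinarith
    have hNc_lt_a : N c < N a := by nlinarith
    have hNc : N c < 1/5 := lt_trans hNc_lt_b hNb
    have hca : c * a = a * c := by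
      by_contra hca
      have hmem : (c, a) ∈ P := by
        rw [hP, Finset.mem_filter]
        exact ⟨Finset.mem_univ _, hNc, hNa, hca⟩
      have := hmin _ hmem
      simp only at this
      nlinarith
    have hcbc : c * b = b * c := by
      by_contra hcb'
      have hmem : (c, b) ∈ P := by
        rw [hP, Finset.mem_filter]
        exact ⟨Finset.mem_univ _, hNc, hNb, hcb'⟩
      have := hmin _ hmem
      simp only at this
      nlinarith
    -- conjugation identity
    have hbab : b⁻¹ * a * b = a * c := by rw [hc]; group
    have hcomm_cb : Commute c b := hcbc
    have hconj : ∀ k : ℕ, b⁻¹ ^ k * a * b ^ k = a * c ^ k := by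
      intro k
      induction k with
      | zero => simp
      | succ k ih =>
        have hbk : c ^ k * b = b * c ^ k := hcomm_cb.pow_left k
        have step1 : b⁻¹ ^ (k+1) * a * b ^ (k+1) = b⁻¹ * (b⁻¹ ^ k * a * b ^ k) * b := by
          rw [pow_succ b, pow_succ' b⁻¹]; group
        rw [step1, ih]
        calc b⁻¹ * (a * c ^ k) * b = (b⁻¹ * a) * (c ^ k * b) := by group
          _ = (b⁻¹ * a) * (b * c ^ k) := by rw [hbk]
          _ = (b⁻¹ * a * b) * c ^ k := by group
          _ = (a * c) * c ^ k := by rw [hbab]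
          _ = a * c ^ (k+1) := by rw [pow_succ' c]; group
    have hck : ∀ k : ℕ, ‖cl (c ^ k) - 1‖ ≤ 4/5 := by
      intro k
      have hck_eq : c ^ k = a⁻¹ * (b⁻¹ ^ k * a * b ^ k) := by
        rw [hconj k]; group
      have e : cl (c ^ k) = cl a⁻¹ * cl (b⁻¹ ^ k) * cl a * cl (b ^ k) := by
        rw [hck_eq, map_mul, map_mul, map_mul, ← mul_assoc, ← mul_assoc]
      have hBinv : cl (b⁻¹ ^ k) * cl (b ^ k) = 1 := by
        rw [← map_mul, inv_pow, inv_mul_cancel, map_one]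
      have hBle : ‖cl (b⁻¹ ^ k)‖ ≤ 1 := hNle _
      have := comm_est (hinv a) hBinv (hNle a⁻¹) hBle
      rw [e]
      have hbkbd := hNbd (b ^ k)
      have h0 := norm_nonneg (cl (b ^ k) - 1)
      have h0a := norm_nonneg (cl a - 1)
      nlinarith
    -- averaging: c must be 1
    have hcone : c = 1 := by
      by_contra hcne
      set u := cl c with hu
      set m := orderOf c with hm
      have hmpos : 0 < m := orderOf_pos c
      have hum : u ^ m = 1 := by rw [hu, ← map_pow, hm, pow_orderOf_eq_one, map_one]
      set Q : CLM := (m:ℝ)⁻¹ • ∑ k ∈ Finset.range m, u ^ k with hQ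
      have hmne : ((m:ℝ)) ≠ 0 := by
        have : (0:ℝ) < (m:ℝ) := by exact_mod_cast hmpos
        linarith
      have hsum1 : (m:ℝ)⁻¹ • (∑ _k ∈ Finset.range m, (1:CLM)) = 1 := by
        rw [Finset.sum_const, Finset.card_range, ← Nat.cast_smul_eq_nsmul ℝ, smul_smul,
          inv_mul_cancel₀ hmne, one_smul]
      have hQ1 : ‖Q - 1‖ ≤ 4/5 := by
        have hQsub : (m:ℝ)⁻¹ • ∑ k ∈ Finset.range m, (u ^ k - 1) = Q - 1 := by
          rw [Finset.sum_sub_distrib, smul_sub, hsum1]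
        rw [← hQsub]
        have hbound : ‖∑ k ∈ Finset.range m, (u ^ k - 1)‖ ≤ (m:ℝ) * (4/5) := by
          refine le_trans (norm_sum_le _ _) ?_
          have : ∀ k ∈ Finset.range m, ‖u ^ k - 1‖ ≤ 4/5 := by
            intro k _
            rw [hu, ← map_pow]
            exact hck k
          calc ∑ k ∈ Finset.range m, ‖u ^ k - 1‖ ≤ ∑ _k ∈ Finset.range m, (4/5:ℝ) :=
                Finset.sum_le_sum this
            _ = (m:ℝ) * (4/5) := by rw [Finset.sum_const, Finset.card_range, nsmul_eq_mul]
        have hmr : (0:ℝ) < (m:ℝ) := by exact_mod_cast hmpos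
        have hnormm : ‖((m:ℝ)⁻¹)‖ = (m:ℝ)⁻¹ := by
          rw [Real.norm_eq_abs, abs_of_pos (by positivity)]
        have hfinal : ‖((m:ℝ)⁻¹)‖ * ‖∑ k ∈ Finset.range m, (u ^ k - 1)‖ ≤ 4/5 := by
          rw [hnormm]
          calc (m:ℝ)⁻¹ * ‖∑ k ∈ Finset.range m, (u ^ k - 1)‖ ≤ (m:ℝ)⁻¹ * ((m:ℝ) * (4/5)) := by
                exact mul_le_mul_of_nonneg_left hbound (by positivity)
            _ = 4/5 := by field_simp
        exact le_trans (clm_norm_smul_le _ _) hfinal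
      have huQ : u * Q = Q := by
        rw [hQ, mul_smul_comm, Finset.mul_sum]
        congr 1
        have e1 : ∀ k ∈ Finset.range m, u * u ^ k = u ^ (k+1) := fun k _ => (pow_succ' u k).symm
        rw [Finset.sum_congr rfl e1]
        obtain ⟨m', hm'⟩ := Nat.exists_eq_succ_of_ne_zero hmpos.ne'
        rw [hm', Finset.sum_range_succ, Finset.sum_range_succ']
        have hlast := hum
        rw [hm'] at hlast
        rw [hlast]
        simp
      have hQunit : ∃ w : CLMˣ, (w : CLM) = Q := by
        have hlt : ‖(1:CLM) - Q‖ < 1 := by rw [norm_sub_rev]; linarith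
        exact ⟨Units.oneSub (1 - Q) hlt, by simp⟩
      obtain ⟨w, hw⟩ := hQunit
      have hzero : (u - 1) * Q = 0 := by rw [sub_mul, one_mul, huQ, sub_self]
      have hu1 : u = 1 := by
        have hQw : Q * (↑w⁻¹ : CLM) = 1 := by rw [← hw]; exact w.mul_inv
        have huu : u - 1 = ((u - 1) * Q) * (↑w⁻¹ : CLM) := by
          rw [mul_assoc, hQw, mul_one]
        rw [hzero, zero_mul] at huu
        exact sub_eq_zero.mp huu
      exact hcne (hclinj (by rw [← hu, hu1, map_one]))
    exact hab (by
      calc a * b = (b * a) * (a⁻¹ * b⁻¹ * a * b) := by group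
        _ = (b * a) * c := by rw [← hc]
        _ = b * a := by rw [hcone, mul_one])
  -- construct the abelian subgroup and bound its index
  set s : Set Γ := {g | N g < 1/5} with hs
  have hcomm : ∀ x ∈ s, ∀ y ∈ s, x * y = y * x := fun x hx y hy => key x y hx hy
  refine ⟨Subgroup.closure s, closure_isCommutative hcomm, ?_⟩
  rw [Subgroup.index_eq_card]
  have hcover : ∀ g : Γ, ∃ p, p ∈ t ∧ cl g ∈ Metric.ball p (1/10) := by
    intro g
    have hg : cl g ∈ Metric.closedBall (0:CLM) 1 := mem_closedBall_zero_iff.mpr (hNle g)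
    simpa using Set.mem_iUnion₂.mp (ht hg)
  choose pc hpt hpb using hcover
  have hinj : Function.Injective
      (fun q : Γ ⧸ Subgroup.closure s => (⟨pc q.out, hpt q.out⟩ : {p // p ∈ t})) := by
    intro q1 q2 h12
    have hpeq : pc q1.out = pc q2.out := congrArg Subtype.val h12
    have d1 := hpb q1.out
    have d2 := hpb q2.out
    rw [hpeq] at d1
    have hd : ‖cl q2.out - cl q1.out‖ < 1/5 := by
      rw [Metric.mem_ball] at d1 d2
      have tri := dist_triangle (cl q2.out) (pc q2.out) (cl q1.out)
      rw [← dist_eq_norm]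
      have : dist (pc q2.out) (cl q1.out) = dist (cl q1.out) (pc q2.out) := dist_comm _ _
      linarith
    have hmem : q1.out⁻¹ * q2.out ∈ s := by
      show N (q1.out⁻¹ * q2.out) < 1/5
      show ‖cl (q1.out⁻¹ * q2.out) - 1‖ < 1/5
      have e : cl (q1.out⁻¹ * q2.out) - 1 = cl q1.out⁻¹ * (cl q2.out - cl q1.out) := by
        rw [map_mul, mul_sub, hinv q1.out]
      rw [e]
      calc ‖cl q1.out⁻¹ * (cl q2.out - cl q1.out)‖
          ≤ ‖cl q1.out⁻¹‖ * ‖cl q2.out - cl q1.out‖ := norm_mul_le _ _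
        _ < 1/5 := by nlinarith [hNle q1.out⁻¹, norm_nonneg (cl q2.out - cl q1.out),
            norm_nonneg (cl q1.out⁻¹)]
    have heq : ((q1.out : Γ) : Γ ⧸ Subgroup.closure s) = (q2.out : Γ) :=
      QuotientGroup.eq.mpr (Subgroup.subset_closure hmem)
    rw [← QuotientGroup.out_eq' q1, ← QuotientGroup.out_eq' q2]
    exact heq
  calc Nat.card (Γ ⧸ Subgroup.closure s) ≤ Nat.card {p // p ∈ t} :=
        Nat.card_le_card_of_injective _ hinj
    _ = t.card := Nat.card_eq_finsetCard t
    _ ≤ t.card + 1 := Nat.le_succ _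


end PartA

section PartB


variable {X : Type} [TopologicalSpace X] [ChartedSpace E4 X]
  [IsManifold (𝓡 4) ((⊤ : ℕ∞) : WithTop ℕ∞) X]

/-- the written-in-chart map of `φ` in the chart at `y`. -/
def wc (y : X) (φ : Equiv.Perm X) : E4 → E4 :=
  (extChartAt (𝓡 4) y) ∘ φ ∘ (extChartAt (𝓡 4) y).symm

lemma wc_fix {y : X} {φ : Equiv.Perm X} (h : φ y = y) :
    wc y φ (extChartAt (𝓡 4) y y) = extChartAt (𝓡 4) y y := by
  simp [wc, extChartAt_to_inv, h]

lemma wc_contDiffAt {y : X} {φ : Equiv.Perm X} (hs : ContMDiff (𝓡 4) (𝓡 4) (⊤ : ℕ∞) ⇑φ)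
    (h : φ y = y) : ContDiffAt ℝ (⊤:ℕ∞) (wc y φ) (extChartAt (𝓡 4) y y) := by
  have h1 : ContMDiffAt (𝓡 4) (𝓡 4) (⊤ : ℕ∞) (⇑φ) y := hs y
  rw [contMDiffAt_iff] at h1
  obtain ⟨hc, hd⟩ := h1
  rw [h] at hd
  have : Set.range (𝓡 4) = Set.univ := by
    simp [ModelWithCorners.range_eq_univ]
  rw [this, contDiffWithinAt_univ] at hd
  exact hd

lemma wc_tendsto {y : X} {φ : Equiv.Perm X} (hs : ContMDiff (𝓡 4) (𝓡 4) (⊤ : ℕ∞) ⇑φ)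
    (h : φ y = y) :
    Tendsto (wc y φ) (𝓝 (extChartAt (𝓡 4) y y)) (𝓝 (extChartAt (𝓡 4) y y)) := by
  have := (wc_contDiffAt hs h).continuousAt
  rw [ContinuousAt, wc_fix h] at this
  exact this

lemma wc_cocycle {y : X} {φ ψ : Equiv.Perm X}
    (hφ : ContMDiff (𝓡 4) (𝓡 4) (⊤ : ℕ∞) ⇑φ) (hψ : ContMDiff (𝓡 4) (𝓡 4) (⊤ : ℕ∞) ⇑ψ)
    (hfφ : φ y = y) (hfψ : ψ y = y) :
    wc y (φ * ψ) =ᶠ[𝓝 (extChartAt (𝓡 4) y y)] (wc y φ) ∘ (wc y ψ) := by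
  set e := extChartAt (𝓡 4) y with he
  -- eventually, e.symm z ∈ e.source and ψ (e.symm z) ∈ e.source
  have h1 : Tendsto e.symm (𝓝 (e y)) (𝓝 y) := by
    have := continuousAt_extChartAt_symm (I := 𝓡 4) y
    rwa [ContinuousAt, extChartAt_to_inv] at this
  have h2 : Tendsto (fun z => ψ (e.symm z)) (𝓝 (e y)) (𝓝 y) := by
    have hψc : ContinuousAt (⇑ψ) y := hψ.continuous.continuousAt
    rw [ContinuousAt, hfψ] at hψc
    exact hψc.comp h1
  have h3 : ∀ᶠ z in 𝓝 (e y), ψ (e.symm z) ∈ e.source :=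
    h2.eventually (extChartAt_source_mem_nhds (I := 𝓡 4) y)
  filter_upwards [h3] with z hz
  show e ((φ * ψ) (e.symm z)) = e (φ (e.symm (e (ψ (e.symm z)))))
  rw [Equiv.Perm.mul_apply, e.left_inv hz]

lemma wc_one_eventually (y : X) :
    wc y (1 : Equiv.Perm X) =ᶠ[𝓝 (extChartAt (𝓡 4) y y)] id := by
  filter_upwards [extChartAt_target_mem_nhds (I := 𝓡 4) y] with z hz
  show (extChartAt (𝓡 4) y) ((1 : Equiv.Perm X) ((extChartAt (𝓡 4) y).symm z)) = z
  rw [Equiv.Perm.coe_one, id_eq, (extChartAt (𝓡 4) y).right_inv hz]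

/-- derivative of the chart representative at the fixed point -/
def df (y : X) (φ : Equiv.Perm X) : E4 →L[ℝ] E4 :=
  fderiv ℝ (wc y φ) (extChartAt (𝓡 4) y y)

lemma one_le_inf : (1 : WithTop ℕ∞) ≤ ((⊤:ℕ∞) : WithTop ℕ∞) := by
  exact_mod_cast (le_top : (1:ℕ∞) ≤ ⊤)

lemma df_mul {y : X} {φ ψ : Equiv.Perm X}
    (hφ : ContMDiff (𝓡 4) (𝓡 4) (⊤ : ℕ∞) ⇑φ) (hψ : ContMDiff (𝓡 4) (𝓡 4) (⊤ : ℕ∞) ⇑ψ)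
    (hfφ : φ y = y) (hfψ : ψ y = y) :
    df y (φ * ψ) = (df y φ).comp (df y ψ) := by
  have hdφ : DifferentiableAt ℝ (wc y φ) (wc y ψ (extChartAt (𝓡 4) y y)) := by
    rw [wc_fix hfψ]
    exact (wc_contDiffAt hφ hfφ).differentiableAt (by simp)
  have hdψ : DifferentiableAt ℝ (wc y ψ) (extChartAt (𝓡 4) y y) :=
    (wc_contDiffAt hψ hfψ).differentiableAt (by simp)
  have h2 := fderiv_comp (𝕜 := ℝ) (extChartAt (𝓡 4) y y) hdφ hdψ
  rw [wc_fix hfψ] at h2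
  exact (wc_cocycle hφ hψ hfφ hfψ).fderiv_eq.trans h2
lemma df_one (y : X) : df y (1 : Equiv.Perm X) = ContinuousLinearMap.id ℝ E4 := by
  have h : fderiv ℝ (wc y (1 : Equiv.Perm X)) (extChartAt (𝓡 4) y y)
      = fderiv ℝ (id : E4 → E4) (extChartAt (𝓡 4) y y) :=
    Filter.EventuallyEq.fderiv_eq (wc_one_eventually y)
  show fderiv ℝ (wc y (1 : Equiv.Perm X)) (extChartAt (𝓡 4) y y) = _
  rw [h, fderiv_id]

lemma df_inv_comp {y : X} (H : Subgroup (Equiv.Perm X))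
    (hsm : ∀ φ ∈ H, ContMDiff (𝓡 4) (𝓡 4) (⊤ : ℕ∞) ⇑φ)
    (hy : ∀ g ∈ H, g y = y) (g : H) :
    (df y ↑g⁻¹).comp (df y ↑g) = ContinuousLinearMap.id ℝ E4 := by
  rw [← df_mul (hsm _ g⁻¹.2) (hsm _ g.2) (hy _ g⁻¹.2) (hy _ g.2)]
  have : (↑g⁻¹ : Equiv.Perm X) * ↑g = 1 := by
    rw [← Subgroup.coe_mul, inv_mul_cancel, Subgroup.coe_one]
  rw [this, df_one]

lemma bochner (H : Subgroup (Equiv.Perm X)) (hfin : Finite H)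
    (hsm : ∀ φ ∈ H, ContMDiff (𝓡 4) (𝓡 4) (⊤ : ℕ∞) ⇑φ)
    {y : X} (hy : ∀ g ∈ H, g y = y)
    {a : Equiv.Perm X} (ha : a ∈ H)
    (hda : df y a = ContinuousLinearMap.id ℝ E4) :
    ∀ᶠ z in 𝓝 y, a z = z := by
  classical
  letI : Fintype H := Fintype.ofFinite H
  set a' : H := ⟨a, ha⟩ with ha'
  have hda'inv : df y ↑(a'⁻¹) = ContinuousLinearMap.id ℝ E4 := by
    have h := df_inv_comp H hsm hy a'
    have hcoe : (↑a' : Equiv.Perm X) = a := rfl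
    rw [hcoe, hda, ContinuousLinearMap.comp_id] at h
    exact h
  set n : ℝ := (Fintype.card H : ℝ) with hn
  have hnpos : (0:ℝ) < n := by
    rw [hn]; exact_mod_cast Fintype.card_pos
  set hh : E4 → E4 := fun z => n⁻¹ • ∑ g : H, (df y ↑g⁻¹) (wc y ↑g z) with hhh
  set y₀ := extChartAt (𝓡 4) y y with hy₀
  -- smoothness of hh at y₀
  have hcd : ContDiffAt ℝ (⊤:ℕ∞) hh y₀ := by
    apply ContDiffAt.const_smul
    exact ContDiffAt.sum fun g _ =>
      ((df y ↑g⁻¹).contDiff.contDiffAt).comp y₀ (wc_contDiffAt (hsm _ g.2) (hy _ g.2))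
  -- derivative of hh at y₀ is the identity
  have hF : HasFDerivAt hh
      (n⁻¹ • ∑ g : H, ((df y ↑g⁻¹).comp (df y ↑g))) y₀ := by
    refine HasFDerivAt.const_smul (f := fun z => ∑ g : H, (df y ↑g⁻¹) (wc y ↑g z)) ?_ n⁻¹
    apply HasFDerivAt.fun_sum
    intro g _
    exact ((df y ↑g⁻¹).hasFDerivAt).comp y₀
      (((wc_contDiffAt (hsm _ g.2) (hy _ g.2)).differentiableAt (by simp)).hasFDerivAt)
  have hsum_id : (n⁻¹ • ∑ g : H, ((df y ↑g⁻¹).comp (df y ↑g)))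
      = ContinuousLinearMap.id ℝ E4 := by
    have : ∀ g : H, (df y ↑g⁻¹).comp (df y ↑g) = ContinuousLinearMap.id ℝ E4 :=
      df_inv_comp H hsm hy
    rw [Finset.sum_congr rfl (fun g _ => this g), Finset.sum_const, Finset.card_univ,
      ← Nat.cast_smul_eq_nsmul ℝ, smul_smul, ← hn, inv_mul_cancel₀ hnpos.ne', one_smul]
  rw [hsum_id] at hF
  have hfderiv : fderiv ℝ hh y₀ = ContinuousLinearMap.id ℝ E4 := hF.fderiv
  have hstrict : HasStrictFDerivAt hh
      (↑(ContinuousLinearEquiv.refl ℝ E4) : E4 →L[ℝ] E4) y₀ := by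
    have := hcd.hasStrictFDerivAt (by simp)
    rw [hfderiv] at this
    exact this
  -- equivariance
  have heq : (fun z => hh (wc y a z)) =ᶠ[𝓝 y₀] hh := by
    have hall : ∀ᶠ z in 𝓝 y₀, ∀ g : H, wc y (↑g * a) z = wc y ↑g (wc y a z) :=
      Filter.eventually_all.mpr fun g =>
        wc_cocycle (hsm _ g.2) (hsm a ha) (hy _ g.2) (hy a ha)
    filter_upwards [hall] with z hz
    show hh (wc y a z) = hh z
    rw [hhh]
    simp only
    congr 1
    have hterm : ∀ g : H, (df y ↑g⁻¹) (wc y ↑g (wc y a z))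
        = (df y ↑((g * a')⁻¹)) (wc y ↑(g * a') z) := by
      intro g
      have h1 : wc y ↑g (wc y a z) = wc y ↑(g * a') z := by
        rw [← hz g]; rfl
      have h2 : df y ↑((g * a')⁻¹) = df y ↑g⁻¹ := by
        have hc : (↑((g * a')⁻¹) : Equiv.Perm X) = ↑(a'⁻¹) * ↑(g⁻¹) := by
          rw [mul_inv_rev, Subgroup.coe_mul]
        rw [hc, df_mul (hsm _ a'⁻¹.2) (hsm _ g⁻¹.2) (hy _ a'⁻¹.2) (hy _ g⁻¹.2),
          hda'inv, ContinuousLinearMap.id_comp]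
      rw [h1, h2]
    rw [Finset.sum_congr rfl (fun g _ => hterm g)]
    exact Fintype.sum_equiv (Equiv.mulRight a') _ _ (fun g => rfl)
  -- local inverse argument
  have hlinv := hstrict.eventually_left_inverse
  have htd : Tendsto (wc y a) (𝓝 y₀) (𝓝 y₀) := wc_tendsto (hsm a ha) (hy a ha)
  have h3 : ∀ᶠ z in 𝓝 y₀, wc y a z = z := by
    filter_upwards [htd.eventually hlinv, heq, hlinv] with z e1 e2 e3
    calc wc y a z = hstrict.localInverse _ _ _ (hh (wc y a z)) := e1.symm
      _ = hstrict.localInverse _ _ _ (hh z) := by rw [e2]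
      _ = z := e3
  -- transport back to X
  have hacont : Tendsto (⇑a) (𝓝 y) (𝓝 y) := by
    have := (hsm a ha).continuous.continuousAt (x := y)
    rwa [ContinuousAt, hy a ha] at this
  have hec : Tendsto (⇑(extChartAt (𝓡 4) y)) (𝓝 y) (𝓝 y₀) :=
    continuousAt_extChartAt (I := 𝓡 4) y
  filter_upwards [extChartAt_source_mem_nhds (I := 𝓡 4) y,
    hacont.eventually (extChartAt_source_mem_nhds (I := 𝓡 4) y),
    hec.eventually h3] with w h1 h2 hw
  have : (extChartAt (𝓡 4) y) (a ((extChartAt (𝓡 4) y).symm ((extChartAt (𝓡 4) y) w)))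
      = (extChartAt (𝓡 4) y) w := hw
  rw [(extChartAt (𝓡 4) y).left_inv h1] at this
  exact (extChartAt (𝓡 4) y).injOn h2 h1 this

lemma perm_pow_fix {a : Equiv.Perm X} {y : X} (hfix : a y = y) :
    ∀ g ∈ Subgroup.zpowers a, g y = y := by
  have hnat : ∀ n : ℕ, (a ^ n) y = y := by
    intro n
    induction n with
    | zero => rfl
    | succ n ih => rw [pow_succ, Equiv.Perm.mul_apply, hfix, ih]
  intro g hg
  obtain ⟨k, rfl⟩ := Subgroup.mem_zpowers_iff.mp hg
  match k with
  | (n : ℕ) => rw [zpow_natCast]; exact hnat n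
  | (Int.negSucc n) =>
    rw [zpow_negSucc]
    have h := hnat (n + 1)
    calc (a ^ (n+1))⁻¹ y = (a ^ (n+1))⁻¹ ((a ^ (n+1)) y) := by rw [h]
      _ = y := by simp

lemma closure_point_df_id [T2Space X] {a : Equiv.Perm X}
    (hsma : ContMDiff (𝓡 4) (𝓡 4) (⊤ : ℕ∞) ⇑a)
    {S : Set X} (hSfix : ∀ w ∈ S, ∀ᶠ z in 𝓝 w, a z = z)
    {y : X} (hyc : y ∈ closure S) (hay : a y = y) :
    df y a = ContinuousLinearMap.id ℝ E4 := by
  set e := extChartAt (𝓡 4) y with he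
  set y₀ := e y with hy₀
  have hcda : ContDiffAt ℝ (⊤:ℕ∞) (wc y a) y₀ := wc_contDiffAt hsma hay
  obtain ⟨u, hu_nhds, hu⟩ : ∃ u ∈ 𝓝 y₀, ContDiffOn ℝ 1 (wc y a) u :=
    hcda.contDiffOn (by exact_mod_cast (le_top : (1:ℕ∞) ≤ ⊤)) (by simp)
  have hyv : y₀ ∈ interior u := mem_interior_iff_mem_nhds.mpr hu_nhds
  have hcont_fderiv : ContinuousOn (fderiv ℝ (wc y a)) (interior u) :=
    (hu.mono interior_subset).continuousOn_fderiv_of_isOpen isOpen_interior (le_refl 1)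
  set T := e '' (S ∩ e.source) with hT
  have hval : ∀ p ∈ T, fderiv ℝ (wc y a) p = ContinuousLinearMap.id ℝ E4 := by
    rintro p ⟨w, ⟨hwS, hwsrc⟩, rfl⟩
    have hsymm_cont : Tendsto e.symm (𝓝 (e w)) (𝓝 w) := by
      have := continuousAt_extChartAt_symm' (I := 𝓡 4) (x := y) hwsrc
      rwa [ContinuousAt, e.left_inv hwsrc] at this
    have htarget : e.target ∈ 𝓝 (e w) :=
      (isOpen_extChartAt_target (I := 𝓡 4) y).mem_nhds (e.map_source hwsrc)
    have hev : wc y a =ᶠ[𝓝 (e w)] id := by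
      filter_upwards [htarget, hsymm_cont.eventually (hSfix w hwS)] with z h1 h2
      show e (a (e.symm z)) = z
      rw [h2, e.right_inv h1]
    have := hev.fderiv_eq (𝕜 := ℝ)
    rw [this, fderiv_id]
  have hyT : y₀ ∈ closure T := by
    have h1 : y ∈ closure (S ∩ e.source) := by
      have h2 := IsOpen.inter_closure (t := S) (isOpen_extChartAt_source (I := 𝓡 4) y)
      have h3 : y ∈ e.source ∩ closure S := ⟨mem_extChartAt_source (I := 𝓡 4) y, hyc⟩
      have h4 := h2 h3
      rwa [Set.inter_comm] at h4
    have h2 : Tendsto e (𝓝[S ∩ e.source] y) (𝓝[T] y₀) :=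
      ContinuousWithinAt.tendsto_nhdsWithin
        ((continuousAt_extChartAt (I := 𝓡 4) y).continuousWithinAt)
        (Set.mapsTo_image _ _)
    have h3 : (𝓝[S ∩ e.source] y).NeBot := mem_closure_iff_nhdsWithin_neBot.mp h1
    exact mem_closure_iff_nhdsWithin_neBot.mpr ((h3.map e).mono h2)
  have hNe : (𝓝[T] y₀).NeBot := mem_closure_iff_nhdsWithin_neBot.mp hyT
  have hcw : ContinuousAt (fderiv ℝ (wc y a)) y₀ :=
    hcont_fderiv.continuousAt (isOpen_interior.mem_nhds hyv)
  have l1 : Tendsto (fderiv ℝ (wc y a)) (𝓝[T] y₀) (𝓝 (fderiv ℝ (wc y a) y₀)) :=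
    hcw.tendsto.mono_left nhdsWithin_le_nhds
  have l2 : Tendsto (fderiv ℝ (wc y a)) (𝓝[T] y₀) (𝓝 (ContinuousLinearMap.id ℝ E4)) := by
    refine Filter.Tendsto.congr' ?_ tendsto_const_nhds
    exact (eventually_nhdsWithin_of_forall hval).mono fun p hp => hp.symm
  exact tendsto_nhds_unique l1 l2

lemma global (G : Subgroup (Equiv.Perm X)) [T2Space X] [ConnectedSpace X]
    (hfin : Finite G)
    (hsm : ∀ φ ∈ G, ContMDiff (𝓡 4) (𝓡 4) (⊤ : ℕ∞) ⇑φ)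
    {a : Equiv.Perm X} (ha : a ∈ G)
    (hloc : ∃ y : X, ∀ᶠ z in 𝓝 y, a z = z) : a = 1 := by
  obtain ⟨y0, hy0⟩ := hloc
  set S : Set X := {y | ∀ᶠ z in 𝓝 y, a z = z} with hS
  have hacont : Continuous ⇑a := (hsm a ha).continuous
  have hopen : IsOpen S := by
    rw [isOpen_iff_mem_nhds]
    intro y hy
    exact hy.eventually_nhds
  have hsmz : ∀ φ ∈ Subgroup.zpowers a, ContMDiff (𝓡 4) (𝓡 4) (⊤ : ℕ∞) ⇑φ :=
    fun φ hφ => hsm φ (Subgroup.zpowers_le.mpr ha hφ)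
  have hfinz : Finite (Subgroup.zpowers a) :=
    Finite.of_injective (Subgroup.inclusion (Subgroup.zpowers_le.mpr ha))
      (Subgroup.inclusion_injective _)
  have hclosed : IsClosed S := by
    apply isClosed_of_closure_subset
    intro y hy
    have hay : a y = y := by
      have hsub : S ⊆ {x : X | a x = x} := fun z hz => hz.self_of_nhds
      have hcl := closure_mono hsub hy
      have hFixclosed : IsClosed {x : X | a x = x} := isClosed_eq hacont continuous_id
      rwa [hFixclosed.closure_eq] at hcl
    have hda := closure_point_df_id (hsm a ha) (fun w hw => hw) hy hay
    show ∀ᶠ z in 𝓝 y, a z = z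
    exact bochner (Subgroup.zpowers a) hfinz hsmz (perm_pow_fix hay)
      (Subgroup.mem_zpowers a) hda
  have huniv : S = Set.univ :=
    IsClopen.eq_univ ⟨hclosed, hopen⟩ ⟨y0, hy0⟩
  apply Equiv.ext
  intro z
  have hz : z ∈ S := by rw [huniv]; trivial
  simpa using hz.self_of_nhds



end PartB

end Stmt9

open scoped Manifold
open Stmt9 in
/-- **Lemma (linearization at a global fixed point gives a universal Jordan constant).**
There is a universal constant `C` such that: for every connected smooth 4-manifold `X`
and every finite group `G` acting smoothly and effectively on `X` (encoded as a finite
subgroup of the permutation group of `X` all of whose elements are smooth) whose global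
fixed-point set is nonempty, there is an abelian subgroup `A ≤ G` with `[G:A] ≤ C`. -/
theorem stmt_9 :
    ∃ C : ℕ, 0 < C ∧
      ∀ (X : Type) [TopologicalSpace X]
        [ChartedSpace (EuclideanSpace ℝ (Fin 4)) X] [IsManifold (𝓡 4) ((⊤ : ℕ∞) : WithTop ℕ∞) X]
        [T2Space X] [ConnectedSpace X],
        ∀ G : Subgroup (Equiv.Perm X), Finite G →
          (∀ φ ∈ G, ContMDiff (𝓡 4) (𝓡 4) (⊤ : ℕ∞) ⇑φ) →
          (∃ x : X, ∀ g ∈ G, g x = x) →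
          ∃ A : Subgroup (Equiv.Perm X), A ≤ G ∧ IsMulCommutative A ∧ A.relIndex G ≤ C := by
  obtain ⟨C, hC, hJ⟩ := jordan4
  refine ⟨C, hC, ?_⟩
  intro X _ _ _ _ _ G hGfin hsm hfix
  obtain ⟨x, hx⟩ := hfix
  haveI := hGfin
  -- the linearized representation at the global fixed point
  have hval_inv : ∀ g : ↥G, (df x (↑g : Equiv.Perm X)) * (df x ↑g⁻¹) = 1 := by
    intro g
    have h1 : df x ((↑g : Equiv.Perm X) * ↑g⁻¹) = (df x ↑g).comp (df x ↑g⁻¹) :=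
      df_mul (hsm _ g.2) (hsm _ g⁻¹.2) (hx _ g.2) (hx _ g⁻¹.2)
    have h2 : (↑g : Equiv.Perm X) * ↑g⁻¹ = 1 := by
      rw [← Subgroup.coe_mul, mul_inv_cancel, Subgroup.coe_one]
    rw [h2, df_one] at h1
    exact (ContinuousLinearMap.ext fun v => by
      rw [ContinuousLinearMap.mul_apply]
      have := congrArg (fun (T : CLM) => T v) h1
      simpa using this.symm)
  set ρ : ↥G →* CLMˣ := {
    toFun := fun g =>
      { val := df x ↑g
        inv := df x ↑g⁻¹
        val_inv := hval_inv g
        inv_val := by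
          have := hval_inv g⁻¹
          rwa [inv_inv] at this }
    map_one' := by
      apply Units.ext
      show df x ↑(1 : ↥G) = 1
      rw [Subgroup.coe_one, df_one]
      rfl
    map_mul' := fun g h => by
      apply Units.ext
      show df x ↑(g * h) = (df x ↑g) * (df x ↑h)
      rw [Subgroup.coe_mul]
      have := df_mul (y := x) (hsm _ g.2) (hsm _ h.2) (hx _ g.2) (hx _ h.2)
      rw [this]
      rfl } with hρ
  have hρinj : Function.Injective ρ := by
    rw [injective_iff_map_eq_one]
    intro k hk
    have hdk : df x ↑k = ContinuousLinearMap.id ℝ E4 := by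
      have := congrArg Units.val hk
      exact (by simpa [hρ] using this : df x ↑k = 1)
    have hev : ∀ᶠ z in 𝓝 x, (↑k : Equiv.Perm X) z = z :=
      bochner G hGfin hsm hx k.2 hdk
    have : (↑k : Equiv.Perm X) = 1 := global G hGfin hsm k.2 ⟨x, hev⟩
    exact Subtype.ext this
  obtain ⟨A'', hA''comm, hA''idx⟩ := hJ ↥G inferInstance inferInstance ρ hρinj
  refine ⟨A''.map G.subtype, Subgroup.map_subtype_le A'', ?_, ?_⟩
  · constructor
    constructor
    rintro ⟨x1, hx1⟩ ⟨x2, hx2⟩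
    apply Subtype.ext
    obtain ⟨a1, ha1, rfl⟩ := Subgroup.mem_map.mp hx1
    obtain ⟨a2, ha2, rfl⟩ := Subgroup.mem_map.mp hx2
    have hcm := hA''comm.is_comm.comm (⟨a1, ha1⟩ : A'') (⟨a2, ha2⟩ : A'')
    have : a1 * a2 = a2 * a1 := congrArg Subtype.val hcm
    show G.subtype a1 * G.subtype a2 = G.subtype a2 * G.subtype a1
    rw [← map_mul, ← map_mul, this]
  · have hco : (A''.map G.subtype).subgroupOf G = A'' :=
      Subgroup.comap_map_eq_self_of_injective G.subtype_injective A''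
    show ((A''.map G.subtype).subgroupOf G).index ≤ C
    rw [hco]
    exact hA''idx
end
end

section
/- Let p be an odd prime, and let U, V ∈ SO(4,ℝ) be two commuting matrices, each of order exactly p. If Ker(U − 1) ≠ Ker(V − 1) and both kernels are nonzero subspaces of ℝ⁴, then Ker(UV − 1) = 0. -/
open Polynomial Module Filter

lemma aux_odd_root (q : ℝ[X]) (hq : q.Monic) (hodd : Odd q.natDegree) :
    ∃ x : ℝ, q.IsRoot x := by
  have hdeg : 0 < q.natDegree := by rcases hodd with ⟨k, hk⟩; omega
  have hdeg' : 0 < q.degree := natDegree_pos_iff_degree_pos.mp hdeg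
  have htop : Tendsto (fun x => q.eval x) atTop atTop :=
    q.tendsto_atTop_of_leadingCoeff_nonneg hdeg' (by simp [hq.leadingCoeff])
  set q' : ℝ[X] := q.comp (-X) with hq'def
  have hdn : (-X : ℝ[X]).natDegree = 1 := by simp
  have hdegq' : q'.natDegree = q.natDegree := by
    rw [hq'def, natDegree_comp, hdn, mul_one]
  have hlead : q'.leadingCoeff = -1 := by
    rw [hq'def, leadingCoeff_comp (by rw [hdn]; norm_num)]
    simp [hq.leadingCoeff, hodd.neg_one_pow]
  have hdegq'' : 0 < q'.degree := by
    rw [← natDegree_pos_iff_degree_pos, hdegq']; exact hdeg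
  have hbot' : Tendsto (fun x => q'.eval x) atTop atBot :=
    q'.tendsto_atBot_of_leadingCoeff_nonpos hdegq'' (by rw [hlead]; norm_num)
  have hbot : Tendsto (fun x => q.eval x) atBot atBot := by
    have hcomp := hbot'.comp tendsto_neg_atBot_atTop
    have : (fun x => q'.eval x) ∘ (fun x : ℝ => -x) = fun x => q.eval x := by
      funext x; simp [hq'def, eval_comp]
    rwa [this] at hcomp
  obtain ⟨x, hx⟩ := (q.continuous_aeval.surjective htop hbot) 0
  exact ⟨x, hx⟩

lemma aux_matrix_fixed (p d : ℕ) (hp : 0 < p) (hodd : Odd p) (hd : Odd d)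
    (M : Matrix (Fin d) (Fin d) ℝ) (hM : M ^ p = 1) :
    ∃ v : Fin d → ℝ, v ≠ 0 ∧ M.mulVec v = v := by
  obtain ⟨μ, hμ⟩ := aux_odd_root M.charpoly M.charpoly_monic
    (by rw [Matrix.charpoly_natDegree_eq_dim]; simpa using hd)
  have hdet : (μ • (1 : Matrix (Fin d) (Fin d) ℝ) - M).det = 0 := by
    have h1 : (Matrix.charmatrix M).map (Polynomial.evalRingHom μ)
        = μ • (1 : Matrix (Fin d) (Fin d) ℝ) - M := by
      ext i j
      by_cases h : i = j <;>
        simp [Matrix.charmatrix, h, Matrix.one_apply, Matrix.smul_apply]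
    have h2 := (Polynomial.evalRingHom μ).map_det (Matrix.charmatrix M)
    rw [RingHom.mapMatrix_apply, h1] at h2
    rw [← h2]
    exact hμ
  obtain ⟨v, hv0, hv⟩ := (Matrix.exists_mulVec_eq_zero_iff).mpr hdet
  have hMv : M.mulVec v = μ • v := by
    have := hv
    rw [Matrix.sub_mulVec, sub_eq_zero] at this
    rw [← this, Matrix.smul_mulVec, Matrix.one_mulVec]
  have hpow : ∀ k : ℕ, (M ^ k).mulVec v = μ ^ k • v := by
    intro k; induction k with
    | zero => simp [Matrix.one_mulVec]
    | succ k ih =>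
        rw [pow_succ', ← Matrix.mulVec_mulVec, ih]
        rw [Matrix.mulVec_smul, hMv, pow_succ', mul_smul]
        exact smul_comm _ _ _
  have hμp : μ ^ p = 1 := by
    have := hpow p
    rw [hM, Matrix.one_mulVec] at this
    have h : (μ ^ p - 1) • v = 0 := by
      rw [sub_smul, one_smul, sub_eq_zero]; exact this.symm
    rcases smul_eq_zero.mp h with h | h
    · exact sub_eq_zero.mp h
    · exact absurd h hv0
  have hμ1 : μ = 1 := by
    have h1p : μ ^ p = 1 ^ p := by rw [one_pow]; exact hμp
    exact (hodd.strictMono_pow (R := ℝ)).injective h1p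
  exact ⟨v, hv0, by rw [hMv, hμ1, one_smul]⟩

lemma aux_two_fixed (p : ℕ) (hp : 0 < p) (hodd : Odd p)
    (M : Matrix (Fin 2) (Fin 2) ℝ) (hM : M ^ p = 1)
    (h01 : M 0 1 = 0) (h11 : M 1 1 = 1) : M = 1 := by
  set β := M 0 0 with hβdef
  set α := M 1 0 with hαdef
  have hMe : M = !![β, 0; α, 1] := by
    ext i j; fin_cases i <;> fin_cases j <;>
      simp [h01, h11, hβdef, hαdef]
  have key : ∀ k : ℕ, M ^ k = !![β ^ k, 0; α * (∑ i ∈ Finset.range k, β ^ i), 1] := by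
    intro k; induction k with
    | zero => simp [Matrix.one_fin_two]
    | succ k ih =>
        rw [pow_succ, ih, hMe, Matrix.mul_fin_two, geom_sum_succ]
        ext i j
        fin_cases i <;> fin_cases j <;> simp [pow_succ] <;> ring
  have hkey := key p
  rw [hM] at hkey
  have hβp : β ^ p = 1 := by
    have := congr_fun (congr_fun hkey.symm 0) 0
    simpa [Matrix.one_fin_two] using this
  have hβ1 : β = 1 := by
    have h1p : β ^ p = 1 ^ p := by rw [one_pow]; exact hβp
    exact (hodd.strictMono_pow (R := ℝ)).injective h1p
  have hα0 : α = 0 := by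
    have := congr_fun (congr_fun hkey.symm 1) 0
    simp [Matrix.one_fin_two, hβ1] at this
    rcases this with h | h
    · exact h
    · exact absurd h (by positivity)
  rw [hMe, hβ1, hα0, Matrix.one_fin_two]

lemma aux_restrict_pow_apply {E : Type*} [AddCommGroup E] [Module ℝ E]
    (f : Module.End ℝ E) (S : Submodule ℝ E) (h : ∀ x ∈ S, f x ∈ S) (k : ℕ) (x : S) :
    (((f.restrict h) ^ k) x : E) = (f ^ k) (x : E) := by
  induction k generalizing x with
  | zero => simp
  | succ k ih =>
      rw [pow_succ, Module.End.mul_apply, pow_succ, Module.End.mul_apply,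
        ih (f.restrict h x), LinearMap.restrict_coe_apply]

lemma aux_even_finrank_range {E : Type*} [AddCommGroup E] [Module ℝ E] [FiniteDimensional ℝ E]
    (p : ℕ) (hp : 0 < p) (hodd : Odd p)
    (f : Module.End ℝ E) (hf : f ^ p = 1) :
    Even (Module.finrank ℝ (LinearMap.range (f - 1) : Submodule ℝ E)) := by
  set W : Submodule ℝ E := LinearMap.range (f - 1) with hWdef
  have hfixpow : ∀ (v : E), f v = v → ∀ i : ℕ, (f ^ i) v = v := by
    intro v hv i
    induction i with
    | zero => simp
    | succ i ih => rw [pow_succ, Module.End.mul_apply, hv, ih]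
  have hdisj : ∀ v : E, f v = v → v ∈ W → v = 0 := by
    intro v hfv hr
    obtain ⟨w, hw⟩ := hr
    set N : Module.End ℝ E := ∑ i ∈ Finset.range p, f ^ i with hNdef
    have h1 : N * (f - 1) = f ^ p - 1 := geom_sum_mul f p
    have hNv0 : N v = 0 := by
      rw [← hw, ← Module.End.mul_apply, h1, hf, sub_self, LinearMap.zero_apply]
    have hNv : N v = (p : ℝ) • v := by
      rw [hNdef, LinearMap.sum_apply]
      have : ∀ i ∈ Finset.range p, (f ^ i) v = v := fun i _ => hfixpow v hfv i
      rw [Finset.sum_congr rfl this, Finset.sum_const, Finset.card_range,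
        Nat.cast_smul_eq_nsmul]
    rw [hNv0] at hNv
    have := hNv.symm
    rcases smul_eq_zero.mp this with h | h
    · exact absurd h (by positivity)
    · exact h
  have hinv : ∀ x ∈ W, f x ∈ W := by
    rintro x ⟨w, rfl⟩
    refine ⟨f w, ?_⟩
    rw [← Module.End.mul_apply, ← Module.End.mul_apply]
    rw [sub_mul, mul_sub, one_mul, mul_one]
  set g : Module.End ℝ W := f.restrict hinv with hgdef
  have hg : g ^ p = 1 := by
    ext x
    rw [aux_restrict_pow_apply f W hinv p x, hf]
    rfl
  by_contra hcontra
  have hd : Odd (Module.finrank ℝ W) := Nat.not_even_iff_odd.mp hcontra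
  set d := Module.finrank ℝ W with hddef
  let b : Basis (Fin d) ℝ W := Module.finBasis ℝ W
  set M : Matrix (Fin d) (Fin d) ℝ := LinearMap.toMatrix b b g with hMdef
  have hM : M ^ p = 1 := by
    rw [hMdef, LinearMap.toMatrix_pow, hg, LinearMap.toMatrix_one]
  obtain ⟨v, hv0, hvfix⟩ := aux_matrix_fixed p d hp hodd hd M hM
  set w : W := b.equivFun.symm v with hwdef
  have hreprw : ⇑(b.repr w) = v := by
    rw [← Basis.equivFun_apply, hwdef, LinearEquiv.apply_symm_apply]
  have hgw : g w = w := by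
    have hmv := LinearMap.toMatrix_mulVec_repr b b g w
    rw [hreprw] at hmv
    rw [hvfix] at hmv
    have : ⇑(b.repr (g w)) = ⇑(b.repr w) := by rw [← hmv, hreprw]
    exact b.repr.injective (DFunLike.coe_injective this)
  have hw0 : w ≠ 0 := by
    intro h
    apply hv0
    rw [← hreprw, h, map_zero]
    rfl
  have hfw : f (w : E) = (w : E) := by
    have h2 := congrArg (Subtype.val) hgw
    rw [hgdef] at h2
    rw [LinearMap.restrict_coe_apply] at h2
    exact h2
  have := hdisj (w : E) hfw w.2
  exact hw0 (Subtype.ext this)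

lemma aux_mem_ker_iff (f : Module.End ℝ (Fin 4 → ℝ)) (x : Fin 4 → ℝ) :
    x ∈ LinearMap.ker (f - 1) ↔ f x = x := by
  rw [LinearMap.mem_ker, LinearMap.sub_apply, Module.End.one_apply, sub_eq_zero]

lemma aux_finrank_two (p : ℕ) (hp : p.Prime) (hodd : Odd p)
    (f : Module.End ℝ (Fin 4 → ℝ)) (hf : f ^ p = 1) (hne1 : f ≠ 1)
    (hker : LinearMap.ker (f - 1) ≠ ⊥) :
    Module.finrank ℝ (LinearMap.ker (f - 1)) = 2 := by
  have heven := aux_even_finrank_range p hp.pos hodd f hf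
  have hsum := LinearMap.finrank_range_add_finrank_ker (f - 1)
  rw [Module.finrank_fin_fun ℝ] at hsum
  have hker_ne_top : LinearMap.ker (f - 1) ≠ ⊤ := by
    intro h
    rw [LinearMap.ker_eq_top] at h
    exact hne1 (sub_eq_zero.mp h)
  have hlt : Module.finrank ℝ (LinearMap.ker (f - 1)) < 4 := by
    have := Submodule.finrank_lt (K := ℝ) (V := Fin 4 → ℝ)
      hker_ne_top
    rwa [Module.finrank_fin_fun ℝ] at this
  have hpos : Module.finrank ℝ (LinearMap.ker (f - 1)) ≠ 0 := by
    intro h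
    exact hker ((Submodule.finrank_eq_zero (R := ℝ)).mp h)
  obtain ⟨k, hk⟩ := heven
  omega

lemma aux_ker_le (p : ℕ) (hp : p.Prime) (hodd : Odd p)
    (f g : Module.End ℝ (Fin 4 → ℝ))
    (hcomm : f * g = g * f) (hgp : g ^ p = 1)
    (hfr2 : Module.finrank ℝ (LinearMap.ker (f - 1)) = 2)
    (x : Fin 4 → ℝ) (hx0 : x ≠ 0) (hxf : f x = x) (hxg : g x = x) :
    LinearMap.ker (f - 1) ≤ LinearMap.ker (g - 1) := by
  set S : Submodule ℝ (Fin 4 → ℝ) := LinearMap.ker (f - 1) with hSdef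
  have hswap : (f - 1) * g = g * (f - 1) := by
    rw [sub_mul, mul_sub, one_mul, mul_one, hcomm]
  have hinv : ∀ y ∈ S, g y ∈ S := by
    intro y hy
    rw [hSdef, LinearMap.mem_ker, ← Module.End.mul_apply, hswap, Module.End.mul_apply]
    rw [hSdef, LinearMap.mem_ker] at hy
    rw [hy, map_zero]
  set gS : Module.End ℝ S := g.restrict hinv with hgSdef
  have hgSp : gS ^ p = 1 := by
    ext y
    rw [aux_restrict_pow_apply g S hinv p y, hgp]
    rfl
  set a : S := ⟨x, (aux_mem_ker_iff f x).mpr hxf⟩ with hadef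
  have ha0 : a ≠ 0 := fun h => hx0 (congrArg Subtype.val h)
  have hga : gS a = a := Subtype.ext (by rw [hgSdef, LinearMap.restrict_coe_apply]; exact hxg)
  -- find y outside the span of a
  have hspan_ne : Submodule.span ℝ {a} ≠ ⊤ := by
    intro h
    have h1 := finrank_span_singleton (K := ℝ) ha0
    rw [h, finrank_top] at h1
    rw [hfr2] at h1
    norm_num at h1
  obtain ⟨y, hy⟩ : ∃ y : S, y ∉ Submodule.span ℝ {a} := by
    by_contra h
    push_neg at h
    exact hspan_ne (Submodule.eq_top_iff'.mpr h)
  have li : LinearIndependent ℝ ![y, a] := by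
    rw [linearIndependent_fin2]
    refine ⟨ha0, fun c hc => hy ?_⟩
    simp only [Matrix.cons_val_one, Matrix.head_cons, Matrix.cons_val_zero] at hc ⊢
    exact Submodule.mem_span_singleton.mpr ⟨c, hc⟩
  have hcard : Fintype.card (Fin 2) = Module.finrank ℝ S := by
    rw [Fintype.card_fin, hfr2]
  set b : Basis (Fin 2) ℝ S := basisOfLinearIndependentOfCardEqFinrank li hcard with hbdef
  have hb : ⇑b = ![y, a] := coe_basisOfLinearIndependentOfCardEqFinrank li hcard
  set M : Matrix (Fin 2) (Fin 2) ℝ := LinearMap.toMatrix b b gS with hMdef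
  have hM : M ^ p = 1 := by
    rw [hMdef, LinearMap.toMatrix_pow, hgSp, LinearMap.toMatrix_one]
  have hb1 : b 1 = a := by rw [hb]; rfl
  have h01 : M 0 1 = 0 := by
    rw [hMdef, LinearMap.toMatrix_apply, hb1, hga, hb1.symm, Basis.repr_self]
    simp
  have h11 : M 1 1 = 1 := by
    rw [hMdef, LinearMap.toMatrix_apply, hb1, hga, hb1.symm, Basis.repr_self]
    simp
  have hM1 : M = 1 := aux_two_fixed p hp.pos hodd M hM h01 h11
  have hgS1 : gS = 1 := by
    apply (LinearMap.toMatrix b b).injective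
    rw [← hMdef, hM1, LinearMap.toMatrix_one]
  intro z hz
  rw [aux_mem_ker_iff]
  have : gS ⟨z, hz⟩ = ⟨z, hz⟩ := by rw [hgS1]; rfl
  have h2 := congrArg Subtype.val this
  rw [hgSdef, LinearMap.restrict_coe_apply] at h2
  exact h2

/-- **Lemma (two commuting rotations of odd prime order in SO(4)).**
Let `p` be an odd prime and let `U, V ∈ SO(4,ℝ)` be commuting matrices of order `p`.
If `Ker (U - 1) ≠ Ker (V - 1)` and both kernels are nonzero, then `Ker (UV - 1) = 0`. -/
theorem stmt_11 (p : ℕ) (hp : p.Prime) (hodd : Odd p)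
    (U V : Matrix.specialOrthogonalGroup (Fin 4) ℝ)
    (hcomm : Commute U V)
    (hU : orderOf U = p) (hV : orderOf V = p)
    (hne : LinearMap.ker (Matrix.toLin' ((U : Matrix (Fin 4) (Fin 4) ℝ) - 1)) ≠
           LinearMap.ker (Matrix.toLin' ((V : Matrix (Fin 4) (Fin 4) ℝ) - 1)))
    (hU0 : LinearMap.ker (Matrix.toLin' ((U : Matrix (Fin 4) (Fin 4) ℝ) - 1)) ≠ ⊥)
    (hV0 : LinearMap.ker (Matrix.toLin' ((V : Matrix (Fin 4) (Fin 4) ℝ) - 1)) ≠ ⊥) :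
    LinearMap.ker (Matrix.toLin' (((U * V : Matrix.specialOrthogonalGroup (Fin 4) ℝ) :
      Matrix (Fin 4) (Fin 4) ℝ) - 1)) = ⊥ := by
  classical
  have hp1 : 1 < p := hp.one_lt
  -- conversion of kernels
  have hconv : ∀ C : Matrix (Fin 4) (Fin 4) ℝ,
      Matrix.toLin' (C - 1) = Matrix.toLinAlgEquiv' C - 1 := by
    intro C
    have h := map_sub Matrix.toLin' C 1
    rw [Matrix.toLin'_one] at h
    exact h.trans rfl
  set A : Matrix (Fin 4) (Fin 4) ℝ := (U : Matrix (Fin 4) (Fin 4) ℝ) with hAdef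
  set B : Matrix (Fin 4) (Fin 4) ℝ := (V : Matrix (Fin 4) (Fin 4) ℝ) with hBdef
  set fU : Module.End ℝ (Fin 4 → ℝ) := Matrix.toLinAlgEquiv' A with hfUdef
  set fV : Module.End ℝ (Fin 4 → ℝ) := Matrix.toLinAlgEquiv' B with hfVdef
  rw [hconv A, hconv B] at hne
  rw [hconv A] at hU0
  rw [hconv B] at hV0
  rw [hconv]
  have hABmul : ((U * V : Matrix.specialOrthogonalGroup (Fin 4) ℝ) :
      Matrix (Fin 4) (Fin 4) ℝ) = A * B := rfl
  rw [hABmul, map_mul] at *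
  -- basic algebraic facts
  have hApow : A ^ p = 1 := by
    have h := pow_orderOf_eq_one U
    rw [hU] at h
    have := congrArg (fun W : Matrix.specialOrthogonalGroup (Fin 4) ℝ =>
      (W : Matrix (Fin 4) (Fin 4) ℝ)) h
    simpa using this
  have hBpow : B ^ p = 1 := by
    have h := pow_orderOf_eq_one V
    rw [hV] at h
    have := congrArg (fun W : Matrix.specialOrthogonalGroup (Fin 4) ℝ =>
      (W : Matrix (Fin 4) (Fin 4) ℝ)) h
    simpa using this
  have hfUp : fU ^ p = 1 := by rw [hfUdef, ← map_pow, hApow, map_one]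
  have hfVp : fV ^ p = 1 := by rw [hfVdef, ← map_pow, hBpow, map_one]
  have hABcomm : A * B = B * A := by
    have := congrArg (fun W : Matrix.specialOrthogonalGroup (Fin 4) ℝ =>
      (W : Matrix (Fin 4) (Fin 4) ℝ)) hcomm
    simpa using this
  have hfcomm : fU * fV = fV * fU := by
    rw [hfUdef, hfVdef, ← map_mul, ← map_mul, hABcomm]
  have hfU1 : fU ≠ 1 := by
    intro h
    have hA1 : A = 1 := by
      apply (Matrix.toLinAlgEquiv'
        (R := ℝ) (n := Fin 4)).injective
      rw [← hfUdef, h, map_one]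
    have : U = 1 := Subtype.ext hA1
    rw [this, orderOf_one] at hU
    omega
  have hfV1 : fV ≠ 1 := by
    intro h
    have hB1 : B = 1 := by
      apply (Matrix.toLinAlgEquiv'
        (R := ℝ) (n := Fin 4)).injective
      rw [← hfVdef, h, map_one]
    have : V = 1 := Subtype.ext hB1
    rw [this, orderOf_one] at hV
    omega
  -- dimensions
  have hKU2 := aux_finrank_two p hp hodd fU hfUp hfU1 hU0
  have hKV2 := aux_finrank_two p hp hodd fV hfVp hfV1 hV0
  -- the two kernels intersect trivially
  have hinf : LinearMap.ker (fU - 1) ⊓ LinearMap.ker (fV - 1) = ⊥ := by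
    by_contra h
    obtain ⟨x, hx, hx0⟩ := (Submodule.ne_bot_iff _).mp h
    obtain ⟨hxU, hxV⟩ := Submodule.mem_inf.mp hx
    rw [aux_mem_ker_iff] at hxU hxV
    have hle := aux_ker_le p hp hodd fU fV hfcomm hfVp hKU2 x hx0 hxU hxV
    have heq := Submodule.eq_of_le_of_finrank_eq hle (by rw [hKU2, hKV2])
    exact hne heq
  -- the two kernels span everything
  have hsup : LinearMap.ker (fU - 1) ⊔ LinearMap.ker (fV - 1) = ⊤ := by
    apply Submodule.eq_top_of_finrank_eq
    have h := Submodule.finrank_sup_add_finrank_inf_eq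
      (LinearMap.ker (fU - 1)) (LinearMap.ker (fV - 1))
    rw [hinf, hKU2, hKV2] at h
    simp only [finrank_bot] at h
    rw [Module.finrank_fin_fun ℝ]
    omega
  -- conclusion
  rw [eq_bot_iff]
  intro x hx
  rw [LinearMap.mem_ker, LinearMap.sub_apply, Module.End.one_apply, sub_eq_zero,
    Module.End.mul_apply] at hx
  have hxmem : x ∈ LinearMap.ker (fU - 1) ⊔ LinearMap.ker (fV - 1) := by
    rw [hsup]; exact Submodule.mem_top
  obtain ⟨a, haU, b, hbV, hab⟩ := Submodule.mem_sup.mp hxmem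
  have hfa : fU a = a := (aux_mem_ker_iff fU a).mp haU
  have hfb : fV b = b := (aux_mem_ker_iff fV b).mp hbV
  -- fV a ∈ ker (fU - 1)
  have hswap : (fU - 1) * fV = fV * (fU - 1) := by
    rw [sub_mul, mul_sub, one_mul, mul_one, hfcomm]
  have hVa_mem : fV a ∈ LinearMap.ker (fU - 1) := by
    rw [LinearMap.mem_ker, ← Module.End.mul_apply, hswap, Module.End.mul_apply]
    rw [aux_mem_ker_iff] at haU
    rw [LinearMap.sub_apply, Module.End.one_apply, haU, sub_self, map_zero]
  have hswap' : (fV - 1) * fU = fU * (fV - 1) := by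
    rw [sub_mul, mul_sub, one_mul, mul_one, hfcomm]
  have hUb_mem : fU b ∈ LinearMap.ker (fV - 1) := by
    rw [LinearMap.mem_ker, ← Module.End.mul_apply, hswap', Module.End.mul_apply]
    rw [LinearMap.sub_apply, Module.End.one_apply, hfb, sub_self, map_zero]
  -- key computation
  have hkey : a - fV a = fU b - b := by
    have h1 : fU (fV x) = x := hx
    have h2 : fU (fV a) = fV a := (aux_mem_ker_iff fU (fV a)).mp hVa_mem
    have h3 : fV a + fU b = a + b := by
      calc fV a + fU b = fU (fV a) + fU (fV b) := by rw [h2, hfb]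
      _ = fU (fV (a + b)) := by rw [map_add, map_add]
      _ = x := by rw [hab]; exact h1
      _ = a + b := hab.symm
    linear_combination (norm := module) -h3
  have hmem1 : a - fV a ∈ LinearMap.ker (fU - 1) ⊓ LinearMap.ker (fV - 1) := by
    refine Submodule.mem_inf.mpr ⟨?_, ?_⟩
    · exact Submodule.sub_mem _ haU hVa_mem
    · rw [hkey]; exact Submodule.sub_mem _ hUb_mem hbV
  rw [hinf] at hmem1
  have hfva : fV a = a := by
    have := (Submodule.mem_bot ℝ).mp hmem1
    have h := sub_eq_zero.mp this
    exact h.symm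
  have hfub : fU b = b := by
    rw [hkey] at hmem1
    have := (Submodule.mem_bot ℝ).mp hmem1
    exact sub_eq_zero.mp this
  have haB : a ∈ LinearMap.ker (fV - 1) := (aux_mem_ker_iff fV a).mpr hfva
  have hbA : b ∈ LinearMap.ker (fU - 1) := (aux_mem_ker_iff fU b).mpr hfub
  have ha0 : a = 0 := by
    have : a ∈ LinearMap.ker (fU - 1) ⊓ LinearMap.ker (fV - 1) :=
      Submodule.mem_inf.mpr ⟨haU, haB⟩
    rw [hinf] at this
    exact (Submodule.mem_bot ℝ).mp this
  have hb0 : b = 0 := by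
    have : b ∈ LinearMap.ker (fU - 1) ⊓ LinearMap.ker (fV - 1) :=
      Submodule.mem_inf.mpr ⟨hbA, hbV⟩
    rw [hinf] at this
    exact (Submodule.mem_bot ℝ).mp this
  rw [Submodule.mem_bot, ← hab, ha0, hb0, add_zero]
end

section
/- For every positive integer n there exist a real number δ > 0 and a positive integer k₀ such that for every integer k ≥ k₀ and any choice of primitive k-th roots of unity θ₁, …, θₙ in the unit circle of ℂ, there exists an integer a such that |Im(θⱼᵃ)| ≥ δ for every j = 1, …, n (here θⱼᵃ again lies on the unit circle and Im(θⱼᵃ) equals the sine of its argument). -/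
open Real (pi)
open scoped Real

open Finset in
private lemma stmt12_arith (n k : ℕ) (hn : 0 < n) (hk : 64 * n ≤ k) :
    n * (6 * (k / (32 * n) + 1)) < k := by
  have h1 : k / (32 * n) * (32 * n) ≤ k := Nat.div_mul_le_self k (32 * n)
  nlinarith [h1, hk, hn]

private lemma stmt12_sin_ge {c u : ℝ} (hc : 0 ≤ c) (h1 : c ≤ u) (h2 : u ≤ 1 - c) :
    2 * c ≤ Real.sin (π * u) := by
  rcases le_or_gt u (1 / 2) with h | h
  · have hb := Real.mul_le_sin (x := π * u) (mul_nonneg Real.pi_pos.le (hc.trans h1))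
      (by nlinarith [Real.pi_pos])
    have : 2 / π * (π * u) = 2 * u := by field_simp
    rw [this] at hb
    linarith
  · have hrw : Real.sin (π * u) = Real.sin (π * (1 - u)) := by
      rw [← Real.sin_pi_sub]; ring_nf
    rw [hrw]
    have hb := Real.mul_le_sin (x := π * (1 - u)) (by nlinarith [Real.pi_pos])
      (by nlinarith [Real.pi_pos])
    have : 2 / π * (π * (1 - u)) = 2 * (1 - u) := by field_simp
    rw [this] at hb
    linarith

private lemma stmt12_sin_abs {k v s : ℝ} (hk : 0 < k) (hs : 0 ≤ s) (h1 : s ≤ v)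
    (h2 : v + s ≤ k) (h3 : 2 * v + s ≤ k ∨ k + s ≤ 2 * v) :
    2 * (s / k) ≤ |Real.sin (2 * π * v / k)| := by
  have hc : (0:ℝ) ≤ s / k := by positivity
  rcases h3 with h3 | h3
  · have hrw : 2 * π * v / k = π * (2 * v / k) := by ring
    rw [hrw]
    refine le_trans (stmt12_sin_ge hc ?_ ?_) (le_abs_self _)
    · rw [div_le_div_iff₀ hk hk]; nlinarith
    · rw [le_sub_iff_add_le, ← add_div, div_le_one hk]; linarith
  · have hrw : 2 * π * v / k = π * ((2 * v - k) / k) + π := by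
      field_simp; ring
    rw [hrw, Real.sin_add_pi, abs_neg]
    refine le_trans (stmt12_sin_ge hc ?_ ?_) (le_abs_self _)
    · rw [div_le_div_iff₀ hk hk]; nlinarith
    · rw [le_sub_iff_add_le, ← add_div, div_le_one hk]; linarith

/-- **Lemma (uniformly bounding sines of powers of primitive roots of unity).**
For every positive integer `n` there exist `δ > 0` and a positive integer `k₀` such
that for every `k ≥ k₀` and any primitive `k`-th roots of unity `θ₁, …, θₙ ∈ S¹ ⊆ ℂ`,
there is an integer `a` with `|Im (θⱼ^a)| ≥ δ` for every `j`. -/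
theorem stmt_12 (n : ℕ) (hn : 0 < n) :
    ∃ δ : ℝ, 0 < δ ∧ ∃ k₀ : ℕ, 0 < k₀ ∧
      ∀ k : ℕ, k₀ ≤ k →
        ∀ θ : Fin n → ℂ, (∀ j, IsPrimitiveRoot (θ j) k) →
          ∃ a : ℤ, ∀ j, δ ≤ |(θ j ^ a).im| := by
  classical
  refine ⟨1 / (16 * n), by positivity, 64 * n, by positivity, ?_⟩
  intro k hk θ hθ
  have hk0 : 0 < k := lt_of_lt_of_le (by positivity) hk
  haveI : NeZero k := ⟨hk0.ne'⟩
  choose m hmlt hmcop hmθ using fun j =>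
    ((Complex.isPrimitiveRoot_iff (θ j) k hk0.ne').mp (hθ j))
  set s : ℕ := k / (32 * n) + 1 with hs_def
  set good : ℕ → Prop := fun v => s ≤ v ∧ v + s ≤ k ∧ (2 * v + s ≤ k ∨ k + s ≤ 2 * v)
    with hgood_def
  -- counting: there is a residue r with all `(r * m j).val` good
  have key : ∃ r : ZMod k, ∀ j, good ((r * (m j : ZMod k)).val) := by
    by_contra hcon
    push_neg at hcon
    have hsub : (Finset.univ : Finset (ZMod k)) ⊆
        Finset.univ.biUnion (fun j : Fin n =>
          Finset.univ.filter fun r : ZMod k => ¬ good ((r * (m j : ZMod k)).val)) := by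
      intro r _
      obtain ⟨j, hj⟩ := hcon r
      exact Finset.mem_biUnion.mpr ⟨j, Finset.mem_univ _, by simp [hj]⟩
    have hbadj : ∀ j : Fin n,
        (Finset.univ.filter fun r : ZMod k => ¬ good ((r * (m j : ZMod k)).val)).card
          ≤ 6 * s := by
      intro j
      set u : (ZMod k)ˣ := ZMod.unitOfCoprime (m j) (hmcop j) with hu_def
      have hu : (u : ZMod k) = (m j : ZMod k) := ZMod.coe_unitOfCoprime _ _
      have hstep1 :
          (Finset.univ.filter fun r : ZMod k => ¬ good ((r * (m j : ZMod k)).val)).card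
            ≤ (Finset.univ.filter fun x : ZMod k => ¬ good x.val).card := by
        apply Finset.card_le_card_of_injOn (fun r => r * (m j : ZMod k))
        · intro r hr
          simp only [Finset.mem_coe, Finset.mem_filter, Finset.mem_univ, true_and] at hr ⊢
          exact hr
        · intro r1 _ r2 _ h
          rw [← hu] at h
          simpa only [Units.mul_inv_cancel_right] using
            congrArg (· * ((u⁻¹ : (ZMod k)ˣ) : ZMod k)) h
      have hstep2 :
          (Finset.univ.filter fun x : ZMod k => ¬ good x.val).card
            ≤ ((Finset.range k).filter fun v => ¬ good v).card := by
        apply Finset.card_le_card_of_injOn (fun x => x.val)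
        · intro x hx
          simp only [Finset.mem_coe, Finset.mem_filter, Finset.mem_univ, true_and] at hx
          simp [Finset.mem_filter, Finset.mem_range, ZMod.val_lt, hx]
        · intro x _ y _ h
          exact ZMod.val_injective k h
      have hsplit : ((Finset.range k).filter fun v => ¬ good v) ⊆
          (((Finset.range k).filter fun v => v < s) ∪
            ((Finset.range k).filter fun v => k < v + s)) ∪
            ((Finset.range k).filter fun v => k < 2 * v + s ∧ 2 * v < k + s) := by
        intro v hv
        simp only [Finset.mem_filter, Finset.mem_range, Finset.mem_union, hgood_def] at hv ⊢
        omega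
      have hc1 : ((Finset.range k).filter fun v => v < s).card ≤ s := by
        refine le_trans (Finset.card_le_card (fun v hv => ?_)) (Finset.card_range s).le
        simp only [Finset.mem_filter, Finset.mem_range] at hv ⊢
        exact hv.2
      have hc2 : ((Finset.range k).filter fun v => k < v + s).card ≤ s := by
        refine le_trans (Finset.card_le_card_of_injOn (fun v => v + s - k) ?_ ?_)
          (Finset.card_range s).le
        · intro v hv
          simp only [Finset.mem_coe, Finset.mem_filter, Finset.mem_range] at hv ⊢
          omega
        · intro v1 h1 v2 h2 h
          simp only [Finset.coe_filter, Finset.mem_range, Set.mem_setOf_eq] at h1 h2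
          dsimp only at h
          omega
      have hc3 : ((Finset.range k).filter fun v => k < 2 * v + s ∧ 2 * v < k + s).card
          ≤ 2 * s := by
        refine le_trans (Finset.card_le_card_of_injOn (fun v => 2 * v + s - k) ?_ ?_)
          (Finset.card_range (2 * s)).le
        · intro v hv
          simp only [Finset.mem_coe, Finset.mem_filter, Finset.mem_range] at hv ⊢
          omega
        · intro v1 h1 v2 h2 h
          simp only [Finset.coe_filter, Finset.mem_range, Set.mem_setOf_eq] at h1 h2
          dsimp only at h
          omega
      calc (Finset.univ.filter fun r : ZMod k => ¬ good ((r * (m j : ZMod k)).val)).card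
          ≤ ((Finset.range k).filter fun v => ¬ good v).card := hstep1.trans hstep2
        _ ≤ _ := Finset.card_le_card hsplit
        _ ≤ (((Finset.range k).filter fun v => v < s).card +
              ((Finset.range k).filter fun v => k < v + s).card) +
              ((Finset.range k).filter fun v => k < 2 * v + s ∧ 2 * v < k + s).card :=
            le_trans (Finset.card_union_le _ _)
              (Nat.add_le_add_right (Finset.card_union_le _ _) _)
        _ ≤ 6 * s := by omega
    have hcard : k ≤ n * (6 * s) := by
      calc k = (Finset.univ : Finset (ZMod k)).card := by rw [Finset.card_univ, ZMod.card]
        _ ≤ (Finset.univ.biUnion (fun j : Fin n =>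
              Finset.univ.filter fun r : ZMod k => ¬ good ((r * (m j : ZMod k)).val))).card :=
            Finset.card_le_card hsub
        _ ≤ ∑ j : Fin n, (Finset.univ.filter
              fun r : ZMod k => ¬ good ((r * (m j : ZMod k)).val)).card :=
            Finset.card_biUnion_le
        _ ≤ ∑ _j : Fin n, 6 * s := Finset.sum_le_sum fun j _ => hbadj j
        _ = n * (6 * s) := by simp [Finset.sum_const, mul_comm]
    exact absurd hcard (not_le.mpr (stmt12_arith n k hn hk))
  obtain ⟨r, hr⟩ := key
  refine ⟨(r.val : ℤ), fun j => ?_⟩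
  set v : ℕ := (r * (m j : ZMod k)).val with hv_def
  have hgood := hr j
  rw [hgood_def] at hgood
  obtain ⟨hg1, hg2, hg3⟩ := hgood
  -- θ j ^ a = exp (2πI * v / k)
  have hmod : v = (r.val * m j) % k := by
    rw [hv_def, ZMod.val_mul, ZMod.val_natCast, Nat.mul_mod, Nat.mod_mod_of_dvd _ dvd_rfl,
      ← Nat.mul_mod]
  have hpow : θ j ^ ((r.val : ℤ)) = Complex.exp (2 * π * Complex.I * (v / k)) := by
    obtain ⟨t, ht⟩ : ∃ t : ℕ, r.val * m j = v + k * t :=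
      ⟨(r.val * m j) / k, by rw [hmod]; exact (Nat.mod_add_div _ _).symm⟩
    rw [zpow_natCast, ← hmθ j, ← Complex.exp_nat_mul]
    have hkC : (k : ℂ) ≠ 0 := Nat.cast_ne_zero.mpr hk0.ne'
    generalize r.val = N at ht ⊢
    have hC : (N : ℂ) * (m j : ℂ) = (v : ℂ) + (k : ℂ) * (t : ℂ) := by exact_mod_cast ht
    have heq : (N : ℂ) * (2 * π * Complex.I * ((m j : ℂ) / k)) =
        2 * π * Complex.I * ((v : ℂ) / k) + ((t : ℤ) : ℂ) * (2 * π * Complex.I) := by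
      push_cast
      field_simp
      linear_combination hC
    rw [heq, Complex.exp_add, Complex.exp_int_mul_two_pi_mul_I]
    ring
  -- imaginary part
  have him : (θ j ^ ((r.val : ℤ))).im = Real.sin (2 * π * v / k) := by
    rw [hpow]
    have : 2 * π * Complex.I * ((v : ℂ) / k) = ((2 * π * v / k : ℝ) : ℂ) * Complex.I := by
      push_cast
      ring
    rw [this, Complex.exp_ofReal_mul_I_im]
  have h2 : k < 32 * n * s := by
    have hm := Nat.mod_lt k (show 0 < 32 * n by positivity)
    calc k = 32 * n * (k / (32 * n)) + k % (32 * n) := (Nat.div_add_mod k (32 * n)).symm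
      _ < 32 * n * (k / (32 * n)) + 32 * n := Nat.add_lt_add_left hm _
      _ = 32 * n * s := by rw [hs_def]; ring
  have hkR : (0:ℝ) < (k : ℝ) := by exact_mod_cast hk0
  have hfin : (1:ℝ) / (16 * n) ≤ 2 * ((s : ℝ) / k) := by
    have h2' : (k : ℝ) < 32 * n * s := by exact_mod_cast h2
    have hnR : (0:ℝ) < (n : ℝ) := by exact_mod_cast hn
    rw [show (2:ℝ) * ((s:ℝ)/k) = (2 * s) / k by ring,
      div_le_div_iff₀ (by positivity) hkR]
    nlinarith
  calc (1:ℝ) / (16 * n) ≤ 2 * ((s : ℝ) / k) := hfin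
    _ ≤ |Real.sin (2 * π * v / k)| := by
        refine stmt12_sin_abs hkR (by positivity) ?_ ?_ ?_
        · exact_mod_cast hg1
        · exact_mod_cast hg2
        · rcases hg3 with h | h
          · left; exact_mod_cast h
          · right; exact_mod_cast h
    _ = |(θ j ^ ((r.val : ℤ))).im| := by rw [him]
end
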